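/- arXiv:1509.01994 — 5 statements merged into one kernel-verified Lean document; each statement's English description precedes it below -/
import Mathlib

section
/- Assume (A1)-(A4) and (B1)-(B3). Then for every u ∈ SX⁺ the functional J constrained to the set ℝu + X̃ = {tu + v : t ∈ ℝ, v ∈ X̃} has precisely two critical points u₁, u₂ with positive energy (i.e. points where the derivative of J vanishes on the subspace ℝu ⊕ X̃ and where J > 0). These are of the form u₁ = t₁u + v₁ and u₂ = t₂u + v₂ with t₁ > 0 > t₂ and v₁, v₂ ∈ X̃. Moreover, u₁ is the unique global maximum of J on ℝ⁺u + X̃ = {tu + v : t ≥ 0, v ∈ X̃}, u₂ is the unique global maximum of J on ℝ⁻u + X̃ = {tu + v : t ≤ 0, v ∈ X̃}, and u₁ and u₂ depend continuously on u ∈ SX⁺. -/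
open Filter Topology

noncomputable section

variable {H W : Type*} [NormedAddCommGroup H] [InnerProductSpace ℝ H] [CompleteSpace H]
  [NormedAddCommGroup W] [NormedSpace ℝ W] [CompleteSpace W]

/-- `uₙ` T-converges to `l`: `uₙ⁺ → l⁺` in the norm of `H` and `ũₙ ⇀ l̃` weakly in `W`. -/
def TConv (u : ℕ → H × W) (l : H × W) : Prop :=
  Tendsto (fun n => (u n).1) atTop (𝓝 l.1) ∧
    ∀ φ : W →L[ℝ] ℝ, Tendsto (fun n => φ (u n).2) atTop (𝓝 (φ l.2))

/-- The Nehari–Pankov set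
`N = {u ≠ 0 : J(u) > 0 and J'(u)[w] = 0 for all w ∈ ℝu + X̃}`. -/
def NehariPankov (J : H × W → ℝ) : Set (H × W) :=
  {u | u ≠ 0 ∧ 0 < J u ∧ ∀ (s : ℝ) (v : W), fderiv ℝ J u (s • u + ((0 : H), v)) = 0}

/-- The natural constraint `M = {u : I'(u)[v] = 0 for all v ∈ X̃}`. -/
def NatConstraint (I : H × W → ℝ) : Set (H × W) :=
  {u | ∀ v : W, fderiv ℝ I u ((0 : H), v) = 0}

/-!
On the half-space `ℝ⁺u + X̃` the functional reads `J(tu + v) = t²/2 − I(tu + v)`. By (B2) a lower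
bound on `J` bounds `t`, and then (B1) bounds the whole point; reflexivity of `W` and (A2) turn a
maximizing sequence into a T-convergent one whose limit is a maximizer. Away from `X̃` a maximizer
is a critical point of `J` on `ℝu + X̃`, and (B3) says that every positive-energy critical point
with `t > 0` is the strict maximum of `J` on its half-space: this gives uniqueness, and the
critical points with `t < 0` are the maximizers for `−u`. For continuity, if `uₙ → u` the
maximizers T-converge along subsequences; comparing with the maximizer for `u` transplanted to the
half-spaces of `uₙ` forces the limit to be that maximizer with convergent energies, and (A3)
upgrades T-convergence to norm convergence.
-/

open Set NormedSpace TopologicalSpace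

section Reflexive

variable {E : Type*} [NormedAddCommGroup E] [NormedSpace ℝ E]

theorem exists_dual_eq_zero_ne_zero_of_notMem {Y : Submodule ℝ E} (hY : IsClosed (Y : Set E))
    {x : E} (hx : x ∉ Y) : ∃ f : StrongDual ℝ E, (∀ y ∈ Y, f y = 0) ∧ f x ≠ 0 := by
  obtain ⟨f, c, hfY, hfx⟩ := geometric_hahn_banach_closed_point Y.convex hY hx
  have hc : 0 < c := by simpa using hfY 0 Y.zero_mem
  refine ⟨f, fun y hy => ?_, fun h => by linarith⟩
  by_contra hfy
  have := hfY (((c + 1) / f y) • y) (Y.smul_mem _ hy)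
  rw [map_smul, smul_eq_mul, div_mul_cancel₀ _ hfy] at this
  linarith

theorem surjective_inclusionInDoubleDual_of_isClosed
    (hE : Function.Surjective (inclusionInDoubleDual ℝ E)) {Y : Submodule ℝ E}
    (hY : IsClosed (Y : Set E)) : Function.Surjective (inclusionInDoubleDual ℝ Y) := by
  intro Λ
  let R : StrongDual ℝ E →L[ℝ] StrongDual ℝ Y :=
    (ContinuousLinearMap.compL ℝ Y E ℝ).flip Y.subtypeL
  obtain ⟨x, hx⟩ := hE (Λ.comp R)
  have hxY : x ∈ Y := by
    by_contra hxY
    obtain ⟨f, hfY, hfx⟩ := exists_dual_eq_zero_ne_zero_of_notMem hY hxY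
    have hRf : R f = 0 := ContinuousLinearMap.ext fun y => hfY y y.2
    exact hfx (by simpa [hRf] using congrArg (fun T => T f) hx)
  refine ⟨⟨x, hxY⟩, ContinuousLinearMap.ext fun ψ => ?_⟩
  obtain ⟨χ, hχ, -⟩ := exists_extension_norm_eq Y ψ
  have hRχ : R χ = ψ := ContinuousLinearMap.ext hχ
  rw [dual_def, ← hχ]
  simpa [hRχ] using congrArg (fun T => T χ) hx

theorem separableSpace_of_separableSpace_strongDual [SeparableSpace (StrongDual ℝ E)] :
    SeparableSpace E := by
  obtain ⟨g, hg⟩ := exists_dense_seq (StrongDual ℝ E)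
  have hx : ∀ k, ∃ x : E, ‖x‖ ≤ 1 ∧ ‖g k‖ ≤ 2 * ‖g k x‖ := by
    intro k
    rcases eq_or_ne (g k) 0 with h | h
    · exact ⟨0, by simp, by simp [h]⟩
    · obtain ⟨x, hx1, hx2⟩ := (g k).exists_lt_apply_of_lt_opNorm
        (half_lt_self (norm_pos_iff.mpr h))
      exact ⟨x, hx1.le, by linarith⟩
  choose x hx1 hx2 using hx
  let Y : Submodule ℝ E := (Submodule.span ℝ (range x)).topologicalClosure
  suffices hY : ∀ z, z ∈ Y by
    rw [← isSeparable_univ_iff]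
    exact (countable_range x).isSeparable.span.closure.mono fun z _ => hY z
  -- `x k` almost norms `g k`, so no `g k` is close to a nonzero functional vanishing on `Y`
  intro z
  by_contra hz
  obtain ⟨f, hfY, hfz⟩ :=
    exists_dual_eq_zero_ne_zero_of_notMem (Submodule.isClosed_topologicalClosure _) hz
  have hf : 0 < ‖f‖ := norm_pos_iff.mpr fun h => hfz (by simp [h])
  obtain ⟨k, hk⟩ := hg.exists_dist_lt f (by positivity : 0 < ‖f‖ / 4)
  have hfx : f (x k) = 0 :=
    hfY _ (Submodule.le_topologicalClosure _ (Submodule.subset_span ⟨k, rfl⟩))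
  have h₁ : ‖g k (x k)‖ ≤ ‖f - g k‖ := by
    calc ‖g k (x k)‖ = ‖(f - g k) (x k)‖ := by simp [hfx]
      _ ≤ ‖f - g k‖ * ‖x k‖ := (f - g k).le_opNorm _
      _ ≤ ‖f - g k‖ := mul_le_of_le_one_right (norm_nonneg _) (hx1 k)
  have h₂ : ‖f‖ ≤ ‖f - g k‖ + ‖g k‖ := norm_le_norm_sub_add f (g k)
  rw [dist_eq_norm] at hk
  linarith [hx2 k]

theorem exists_subseq_weakly_tendsto (hE : Function.Surjective (inclusionInDoubleDual ℝ E))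
    {v : ℕ → E} {B : ℝ} (hv : ∀ n, ‖v n‖ ≤ B) :
    ∃ y : E, ∃ φ : ℕ → ℕ, StrictMono φ ∧
      ∀ ψ : StrongDual ℝ E, Tendsto (fun n => ψ (v (φ n))) atTop (𝓝 (ψ y)) := by
  let Y : Submodule ℝ E := (Submodule.span ℝ (range v)).topologicalClosure
  have hvY : ∀ n, v n ∈ Y :=
    fun n => Submodule.le_topologicalClosure _ (Submodule.subset_span ⟨n, rfl⟩)
  have hY := surjective_inclusionInDoubleDual_of_isClosed hE
    (Submodule.isClosed_topologicalClosure (Submodule.span ℝ (range v)))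
  have : SeparableSpace Y := ((countable_range v).isSeparable.span.closure).separableSpace
  have : SeparableSpace (StrongDual ℝ (StrongDual ℝ Y)) :=
    hY.denseRange.separableSpace (inclusionInDoubleDual ℝ Y).continuous
  have : SeparableSpace (StrongDual ℝ Y) := by
    exact separableSpace_of_separableSpace_strongDual (E := StrongDual ℝ Y)
  obtain ⟨F, -, φ, hφ, hF⟩ := WeakDual.isSeqCompact_closedBall ℝ (StrongDual ℝ Y) 0 B
    (x := fun n => StrongDual.toWeakDual (inclusionInDoubleDual ℝ Y ⟨v n, hvY n⟩))
    (fun n => by simpa using (double_dual_bound ℝ Y ⟨v n, hvY n⟩).trans (hv n))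
  obtain ⟨y, rfl⟩ := hY (WeakDual.toStrongDual F)
  exact ⟨y, φ, hφ, fun ψ => ((WeakDual.eval_continuous (ψ.comp Y.subtypeL)).tendsto _).comp hF⟩

end Reflexive

theorem exists_strictMono_tendsto_atTop_of_not_bddAbove {f : ℕ → ℝ} (hf : ¬BddAbove (range f)) :
    ∃ φ : ℕ → ℕ, StrictMono φ ∧ Tendsto (f ∘ φ) atTop atTop := by
  have hfreq : ∀ n : ℕ, ∃ᶠ k in atTop, (n : ℝ) < f k := fun n => by
    by_contra h
    exact hf (IsBoundedUnder.bddAbove_range ⟨n, by simpa using not_frequently.mp h⟩)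
  obtain ⟨φ, hφ, hlt⟩ := extraction_forall_of_frequently hfreq
  exact ⟨φ, hφ, tendsto_atTop_mono (fun n => (hlt n).le) tendsto_natCast_atTop_atTop⟩

theorem sInf_le_of_sInf_pos {S : Set ℝ} (h : 0 < sInf S) {x : ℝ} (hx : x ∈ S) : sInf S ≤ x := by
  refine csInf_le ?_ hx
  by_contra hS
  simp [Real.sInf_of_not_bddBelow hS] at h

def IsStrictMaxOn {α : Type*} (f : α → ℝ) (s : Set α) (a : α) : Prop :=
  ∀ x ∈ s, x ≠ a → f x < f a

theorem IsStrictMaxOn.isMaxOn {α : Type*} {f : α → ℝ} {s : Set α} {a : α}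
    (h : IsStrictMaxOn f s a) : IsMaxOn f s a := isMaxOn_iff.mpr fun x hx => by
  rcases eq_or_ne x a with rfl | hne
  · exact le_rfl
  · exact (h x hx hne).le

theorem IsStrictMaxOn.eq_of_le {α : Type*} {f : α → ℝ} {s : Set α} {a x : α}
    (h : IsStrictMaxOn f s a) (hx : x ∈ s) (hle : f a ≤ f x) : x = a := by
  by_contra hne
  exact (h x hx hne).not_ge hle

section Energy

omit [CompleteSpace H] [CompleteSpace W]

variable {I : H × W → ℝ}

def energy (I : H × W → ℝ) (w : H × W) : ℝ := 1 / 2 * ‖w.1‖ ^ 2 - I w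

/-- `ℝ⁺u + X̃` -/
def halfSpace (u : H) : Set (H × W) := {w | ∃ (t : ℝ) (v : W), 0 ≤ t ∧ w = (t • u, v)}

def IsConstrainedCrit (J : H × W → ℝ) (u : H) (w : H × W) : Prop :=
  ∀ (s : ℝ) (v : W), fderiv ℝ J w (s • u, v) = 0

structure IsHalfSpaceMax (I : H × W → ℝ) (u : H) (w : H × W) : Prop where
  mem : w ∈ halfSpace u
  energy_pos : 0 < energy I w
  isStrictMaxOn : IsStrictMaxOn (energy I) (halfSpace u) w

/-- Condition (A2). -/
def IsTLowerSemicontinuous (I : H × W → ℝ) : Prop :=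
  ∀ (u : ℕ → H × W) (l : H × W), TConv u l → I l ≤ liminf (fun n => I (u n)) atTop

/-- Condition (A3). -/
def IsTKadecKlee (I : H × W → ℝ) : Prop :=
  ∀ (u : ℕ → H × W) (l : H × W), TConv u l →
    Tendsto (fun n => I (u n)) atTop (𝓝 (I l)) → Tendsto u atTop (𝓝 l)

/-- Condition (B1). -/
def IsCoerciveWithFstNorm (I : H × W → ℝ) : Prop :=
  ∀ u : ℕ → H × W, Tendsto (fun n => ‖u n‖) atTop atTop →
    Tendsto (fun n => ‖(u n).1‖ + I (u n)) atTop atTop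

/-- Condition (B2). -/
def IsSuperquadratic (I : H × W → ℝ) : Prop :=
  ∀ (t : ℕ → ℝ) (u : ℕ → H × W) (u₀ : H), u₀ ≠ 0 → Tendsto t atTop atTop →
    Tendsto (fun n => (u n).1) atTop (𝓝 u₀) → Tendsto (fun n => I (t n • u n) / t n ^ 2) atTop atTop

/-- Condition (B3), for `J = energy I`. -/
def SatisfiesNehariPankovIneq (I : H × W → ℝ) : Prop :=
  ∀ u ∈ NehariPankov (energy I), ∀ t : ℝ, 0 ≤ t → ∀ v : W, t • u + ((0 : H), v) ≠ u →
    (t ^ 2 - 1) / 2 * fderiv ℝ I u u + t * fderiv ℝ I u ((0 : H), v)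
      + I u - I (t • u + ((0 : H), v)) < 0

theorem smul_mk_zero_add_zero_mk (t : ℝ) (u : H) (v : W) :
    t • ((u, 0) : H × W) + ((0 : H), v) = (t • u, v) := by
  ext <;> simp

omit [NormedAddCommGroup W] [NormedSpace ℝ W] in
theorem mem_halfSpace_neg {u : H} {w : H × W} :
    w ∈ halfSpace (-u) ↔ ∃ (t : ℝ) (v : W), t ≤ 0 ∧ w = (t • u, v) := by
  constructor
  · rintro ⟨t, v, ht, rfl⟩
    exact ⟨-t, v, by linarith, by simp⟩
  · rintro ⟨t, v, ht, rfl⟩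
    exact ⟨-t, v, by linarith, by simp⟩

omit [NormedAddCommGroup W] [NormedSpace ℝ W] in
theorem energy_smul_mk {u : H} (hu : ‖u‖ = 1) {t : ℝ} (ht : 0 ≤ t) (v : W) :
    energy I (t • u, v) = t ^ 2 / 2 - I (t • u, v) := by
  simp [energy, norm_smul, hu, abs_of_nonneg ht]
  ring

omit [NormedAddCommGroup W] [NormedSpace ℝ W] in
theorem energy_zero_smul_nonpos (hA1 : ∀ w, 0 ≤ I w) (u : H) (v : W) :
    energy I ((0 : ℝ) • u, v) ≤ 0 := by
  simp [energy, hA1]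

omit [InnerProductSpace ℝ H] [NormedSpace ℝ W] in
theorem continuous_energy (hI : Continuous I) : Continuous (energy I) :=
  (continuous_const.mul (continuous_fst.norm.pow 2)).sub hI

theorem hasFDerivAt_energy (hI : Differentiable ℝ I) (w : H × W) :
    HasFDerivAt (energy I)
      ((innerSL ℝ w.1).comp (ContinuousLinearMap.fst ℝ H W) - fderiv ℝ I w) w := by
  have h := ((hasStrictFDerivAt_norm_sq w.1).hasFDerivAt.comp w hasFDerivAt_fst).const_mul (1 / 2)
  exact (h.sub (hI w).hasFDerivAt).congr_fderiv (by ext x <;> simp)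

theorem fderiv_energy_apply (hI : Differentiable ℝ I) (w x : H × W) :
    fderiv ℝ (energy I) w x = inner ℝ w.1 x.1 - fderiv ℝ I w x := by
  simp [(hasFDerivAt_energy hI w).fderiv]

omit [NormedAddCommGroup W] [NormedSpace ℝ W] in
theorem exists_pos_of_mem_halfSpace (hA1 : ∀ w, 0 ≤ I w) {u : H} {w : H × W}
    (hw : w ∈ halfSpace u) (hpos : 0 < energy I w) : ∃ (t : ℝ) (v : W), 0 < t ∧ w = (t • u, v) := by
  obtain ⟨t, v, ht, rfl⟩ := hw
  refine ⟨t, v, ht.lt_of_ne' ?_, rfl⟩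
  rintro rfl
  exact (energy_zero_smul_nonpos hA1 u v).not_gt hpos

theorem isConstrainedCrit_neg {J : H × W → ℝ} {u : H} {w : H × W} :
    IsConstrainedCrit J (-u) w ↔ IsConstrainedCrit J u w := by
  refine ⟨fun h s v => ?_, fun h s v => ?_⟩ <;> simpa using h (-s) v

theorem IsMaxOn.isConstrainedCrit (hI : Differentiable ℝ I) {u : H} {t : ℝ} {v : W}
    (hmax : IsMaxOn (energy I) (halfSpace u) (t • u, v)) (ht : 0 < t) :
    IsConstrainedCrit (energy I) u (t • u, v) := by
  let L : ℝ × W →L[ℝ] H × W :=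
    ((ContinuousLinearMap.fst ℝ ℝ W).smulRight u).prod (ContinuousLinearMap.snd ℝ ℝ W)
  have hloc : IsLocalMax (energy I ∘ L) (t, v) := by
    filter_upwards [(isOpen_lt continuous_const continuous_fst).mem_nhds ht] with p hp
    exact hmax ⟨p.1, p.2, le_of_lt hp, rfl⟩
  have hL := ((hasFDerivAt_energy hI (t • u, v)).differentiableAt.hasFDerivAt.comp (t, v)
    L.hasFDerivAt).fderiv
  intro s z
  have := congrArg (fun T => T (s, z)) hloc.fderiv_eq_zero
  rwa [hL] at this

theorem isHalfSpaceMax_of_isConstrainedCrit (hI : Differentiable ℝ I)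
    (hB3 : SatisfiesNehariPankovIneq I) {u : H} (hu : ‖u‖ = 1) {t : ℝ} (ht : 0 < t) {v : W}
    (hpos : 0 < energy I (t • u, v)) (hcrit : IsConstrainedCrit (energy I) u (t • u, v)) :
    IsHalfSpaceMax I u (t • u, v) := by
  set w : H × W := (t • u, v)
  have hIw (s : ℝ) (z : W) : fderiv ℝ I w (s • u, z) = s * t := by
    have := hcrit s z
    rw [fderiv_energy_apply hI] at this
    simp [w, inner_smul_left, inner_smul_right, hu] at this
    linarith
  have hN : w ∈ NehariPankov (energy I) := by
    refine ⟨fun h => ?_, hpos, fun s z => ?_⟩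
    · simpa [w, ht.ne', (norm_ne_zero_iff.mp (by simp [hu]) : u ≠ 0)] using congrArg Prod.fst h
    · convert hcrit (s * t) (s • v + z) using 2
      ext <;> simp [w, smul_smul]
  refine ⟨⟨t, v, ht.le, rfl⟩, hpos, ?_⟩
  rintro _ ⟨t', v', ht', rfl⟩ hne
  -- (B3) at `w` with the scaling `t' / t` compares `J (t' u, v')` with `J w`
  have hw' : (t' / t) • w + ((0 : H), v' - (t' / t) • v) = (t' • u, v') := by
    ext <;> simp [w, smul_smul, ht.ne']
  have key := hB3 w hN (t' / t) (by positivity) (v' - (t' / t) • v) (by rwa [hw'])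
  rw [hw', hIw, show ((0 : H), v' - (t' / t) • v) = ((0 : ℝ) • u, v' - (t' / t) • v) by simp,
    hIw] at key
  rw [energy_smul_mk hu ht' v', show energy I w = t ^ 2 / 2 - I w from energy_smul_mk hu ht.le v]
  field_simp at key
  linarith

omit [InnerProductSpace ℝ H] [NormedSpace ℝ W] in
theorem IsCoerciveWithFstNorm.bddAbove_norm (hB1 : IsCoerciveWithFstNorm I) {w : ℕ → H × W}
    (hw : BddAbove (range fun n => ‖(w n).1‖ + I (w n))) : BddAbove (range fun n => ‖w n‖) := by
  by_contra h
  obtain ⟨φ, hφ, hwφ⟩ := exists_strictMono_tendsto_atTop_of_not_bddAbove h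
  exact not_bddAbove_of_tendsto_atTop (hB1 (w ∘ φ) hwφ)
    (hw.mono (by rintro _ ⟨n, rfl⟩; exact ⟨φ n, rfl⟩))

theorem IsSuperquadratic.bddAbove_of_bddBelow_energy (hB2 : IsSuperquadratic I) {uk : ℕ → H}
    (huk : ∀ n, ‖uk n‖ = 1) {u : H} (hu : u ≠ 0) (hlim : Tendsto uk atTop (𝓝 u)) {t : ℕ → ℝ}
    (v : ℕ → W) (hE : BddBelow (range fun n => energy I (t n • uk n, v n))) :
    BddAbove (range t) := by
  by_contra hT
  obtain ⟨φ, hφ, htφ⟩ := exists_strictMono_tendsto_atTop_of_not_bddAbove hT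
  have hI := hB2 (t ∘ φ) (fun n => (uk (φ n), (t (φ n))⁻¹ • v (φ n))) u hu htφ
    (hlim.comp hφ.tendsto_atTop)
  -- by (B2), `J ≤ -t² / 2` eventually along the subsequence
  have hE' : Tendsto (fun n => energy I (t (φ n) • uk (φ n), v (φ n))) atTop atBot := by
    refine tendsto_atBot_mono' _ ?_
      (tendsto_neg_atTop_atBot.comp (((tendsto_pow_atTop two_ne_zero).comp htφ).atTop_div_const
        two_pos))
    filter_upwards [hI.eventually_ge_atTop 1, htφ.eventually_gt_atTop 0] with n h1 htn
    simp only [Function.comp_apply] at h1 htn ⊢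
    rw [Prod.smul_mk, smul_inv_smul₀ htn.ne', le_div_iff₀ (by positivity), one_mul] at h1
    simp only [energy, norm_smul, huk, Real.norm_eq_abs, sq_abs, mul_one]
    linarith
  exact not_bddBelow_of_tendsto_atBot hE' (hE.mono (by rintro _ ⟨n, rfl⟩; exact ⟨φ n, rfl⟩))

theorem exists_subseq_tconv (hWrefl : Function.Surjective (inclusionInDoubleDual ℝ W))
    (hA1 : ∀ w, 0 ≤ I w) (hA2 : IsTLowerSemicontinuous I) (hB1 : IsCoerciveWithFstNorm I)
    (hB2 : IsSuperquadratic I) {uk : ℕ → H} (huk : ∀ n, ‖uk n‖ = 1) {u : H}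
    (hlim : Tendsto uk atTop (𝓝 u)) {w : ℕ → H × W} (hw : ∀ n, w n ∈ halfSpace (uk n))
    (hE : BddBelow (range (energy I ∘ w))) :
    ∃ φ : ℕ → ℕ, StrictMono φ ∧ ∃ l ∈ halfSpace u, ∃ e : ℝ, TConv (w ∘ φ) l ∧
      Tendsto (energy I ∘ w ∘ φ) atTop (𝓝 e) ∧ e ≤ energy I l := by
  have hu : ‖u‖ = 1 := tendsto_nhds_unique hlim.norm (by simp [huk])
  choose t v ht hwtv using hw
  obtain rfl : w = fun n => (t n • uk n, v n) := funext hwtv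
  obtain ⟨c, hc⟩ := hE
  obtain ⟨T, hT⟩ := hB2.bddAbove_of_bddBelow_energy huk (norm_ne_zero_iff.mp (by simp [hu])) hlim v
    ⟨c, hc⟩
  have hJ n : energy I (t n • uk n, v n) = t n ^ 2 / 2 - I (t n • uk n, v n) :=
    energy_smul_mk (huk n) (ht n) (v n)
  have htT n : t n ∈ Icc 0 T := ⟨ht n, hT ⟨n, rfl⟩⟩
  have hIT n : I (t n • uk n, v n) ∈ Icc 0 (T ^ 2 / 2 - c) := by
    have := hc ⟨n, rfl⟩
    simp only [Function.comp_apply, hJ] at this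
    exact ⟨hA1 _, by linarith [pow_le_pow_left₀ (ht n) (htT n).2 2]⟩
  obtain ⟨B, hB⟩ := hB1.bddAbove_norm (w := fun n => (t n • uk n, v n))
    ⟨T + (T ^ 2 / 2 - c), by
      rintro _ ⟨n, rfl⟩
      simp only [norm_smul, huk, Real.norm_eq_abs, abs_of_nonneg (ht n), mul_one]
      exact add_le_add (htT n).2 (hIT n).2⟩
  obtain ⟨⟨τ, i⟩, -, φ₁, hφ₁, hτi⟩ := tendsto_subseq_of_bounded
    ((Metric.isBounded_Icc 0 T).prod (Metric.isBounded_Icc 0 (T ^ 2 / 2 - c)))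
    (x := fun n => (t n, I (t n • uk n, v n))) fun n => ⟨htT n, hIT n⟩
  obtain ⟨y, φ₂, hφ₂, hy⟩ := exists_subseq_weakly_tendsto hWrefl (v := v ∘ φ₁)
    fun n => (norm_snd_le _).trans (hB ⟨φ₁ n, rfl⟩)
  have hτ : Tendsto (t ∘ φ₁ ∘ φ₂) atTop (𝓝 τ) :=
    ((continuous_fst.tendsto _).comp hτi).comp hφ₂.tendsto_atTop
  have hi : Tendsto (fun n => I (t (φ₁ (φ₂ n)) • uk (φ₁ (φ₂ n)), v (φ₁ (φ₂ n)))) atTop (𝓝 i) :=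
    ((continuous_snd.tendsto _).comp hτi).comp hφ₂.tendsto_atTop
  have hTC : TConv (fun n => (t (φ₁ (φ₂ n)) • uk (φ₁ (φ₂ n)), v (φ₁ (φ₂ n)))) (τ • u, y) :=
    ⟨hτ.smul (hlim.comp (hφ₁.comp hφ₂).tendsto_atTop), hy⟩
  have hτ0 : 0 ≤ τ := ge_of_tendsto' hτ fun n => ht _
  refine ⟨φ₁ ∘ φ₂, hφ₁.comp hφ₂, (τ • u, y), ⟨τ, y, hτ0, rfl⟩, τ ^ 2 / 2 - i, hTC, ?_, ?_⟩
  · simpa [Function.comp_def, hJ] using ((hτ.pow 2).div_const 2).sub hi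
  · have := hA2 _ _ hTC
    rw [hi.liminf_eq] at this
    rw [energy_smul_mk hu hτ0]
    linarith

omit [InnerProductSpace ℝ H] in
theorem IsTKadecKlee.tendsto_of_tendsto_energy (hA3 : IsTKadecKlee I) {w : ℕ → H × W} {l : H × W}
    (hw : TConv w l) (hE : Tendsto (energy I ∘ w) atTop (𝓝 (energy I l))) :
    Tendsto w atTop (𝓝 l) := by
  refine hA3 w l hw ?_
  have h := ((hw.1.norm.pow 2).const_mul (1 / 2)).sub hE
  simp only [Function.comp_def, energy, sub_sub_cancel] at h
  exact h

omit [NormedAddCommGroup W] [NormedSpace ℝ W] in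
theorem IsHalfSpaceMax.unique {u : H} {w w' : H × W} (h : IsHalfSpaceMax I u w)
    (h' : IsHalfSpaceMax I u w') : w = w' :=
  h'.isStrictMaxOn.eq_of_le h.mem (h.isStrictMaxOn.isMaxOn h'.mem)

theorem IsHalfSpaceMax.isConstrainedCrit (hI : Differentiable ℝ I) (hA1 : ∀ w, 0 ≤ I w) {u : H}
    {w : H × W} (h : IsHalfSpaceMax I u w) : IsConstrainedCrit (energy I) u w := by
  obtain ⟨t, v, ht, rfl⟩ := exists_pos_of_mem_halfSpace hA1 h.mem h.energy_pos
  exact h.isStrictMaxOn.isMaxOn.isConstrainedCrit hI ht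

omit [NormedAddCommGroup W] [NormedSpace ℝ W] in
theorem IsHalfSpaceMax.ne_of_neg (hA1 : ∀ w, 0 ≤ I w) {u : H} (hu : u ≠ 0) {w₁ w₂ : H × W}
    (h₁ : IsHalfSpaceMax I u w₁) (h₂ : IsHalfSpaceMax I (-u) w₂) : w₁ ≠ w₂ := by
  obtain ⟨t₁, v₁, ht₁, rfl⟩ := exists_pos_of_mem_halfSpace hA1 h₁.mem h₁.energy_pos
  obtain ⟨t₂, v₂, ht₂, rfl⟩ := exists_pos_of_mem_halfSpace hA1 h₂.mem h₂.energy_pos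
  intro h
  have : (t₁ + t₂) • u = 0 := by
    rw [add_smul, (Prod.mk.inj h).1, smul_neg, neg_add_cancel]
  rcases smul_eq_zero.mp this with h | h
  · linarith
  · exact hu h

theorem exists_isHalfSpaceMax (hWrefl : Function.Surjective (inclusionInDoubleDual ℝ W))
    (hI : Differentiable ℝ I) (hA1 : ∀ w, 0 ≤ I w) (hA2 : IsTLowerSemicontinuous I)
    (hB1 : IsCoerciveWithFstNorm I) (hB2 : IsSuperquadratic I)
    (hB3 : SatisfiesNehariPankovIneq I) {u : H} (hu : ‖u‖ = 1)
    (hpos : ∃ w ∈ halfSpace u, 0 < energy I w) : ∃ w, IsHalfSpaceMax I u w := by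
  obtain ⟨w₀, hw₀, hw₀pos⟩ := hpos
  have hS : BddAbove (energy I '' halfSpace u) := by
    by_contra hS
    have : ∀ n : ℕ, ∃ w ∈ halfSpace u, (n : ℝ) < energy I w := fun n => by
      obtain ⟨_, ⟨w, hw, rfl⟩, h⟩ := not_bddAbove_iff.mp hS n
      exact ⟨w, hw, h⟩
    choose w hw hlt using this
    obtain ⟨φ, hφ, -, -, e, -, he, -⟩ :=
      exists_subseq_tconv hWrefl hA1 hA2 hB1 hB2 (fun _ => hu) tendsto_const_nhds (w := w) hw
      ⟨0, by rintro _ ⟨n, rfl⟩; exact (Nat.cast_nonneg n).trans (hlt n).le⟩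
    refine not_tendsto_atTop_of_tendsto_nhds he
      (tendsto_atTop_mono (fun n => ?_) tendsto_natCast_atTop_atTop)
    exact (Nat.cast_le.mpr (hφ.id_le n)).trans (hlt (φ n)).le
  obtain ⟨m, hmono, hm, hmS⟩ := exists_seq_tendsto_sSup (Set.Nonempty.image _ ⟨w₀, hw₀⟩) hS
  choose w hw hwm using hmS
  have hbdd : BddBelow (range (energy I ∘ w)) := ⟨m 0, by
    rintro _ ⟨n, rfl⟩
    simpa [hwm] using hmono (Nat.zero_le n)⟩
  obtain ⟨φ, hφ, l, hl, e, -, he, hel⟩ :=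
    exists_subseq_tconv hWrefl hA1 hA2 hB1 hB2 (fun _ => hu) tendsto_const_nhds hw hbdd
  have hmax : IsMaxOn (energy I) (halfSpace u) l := fun x hx => by
    have : e = sSup (energy I '' halfSpace u) :=
      tendsto_nhds_unique he (by simpa [Function.comp_def, hwm] using hm.comp hφ.tendsto_atTop)
    exact (le_csSup hS ⟨x, hx, rfl⟩).trans (this ▸ hel)
  have hlpos : 0 < energy I l := hw₀pos.trans_le (hmax hw₀)
  obtain ⟨t, v, ht, rfl⟩ := exists_pos_of_mem_halfSpace hA1 hl hlpos
  exact ⟨_, isHalfSpaceMax_of_isConstrainedCrit hI hB3 hu ht hlpos (hmax.isConstrainedCrit hI ht)⟩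

theorem tendsto_of_isHalfSpaceMax (hWrefl : Function.Surjective (inclusionInDoubleDual ℝ W))
    (hI : Continuous I) (hA1 : ∀ w, 0 ≤ I w) (hA2 : IsTLowerSemicontinuous I)
    (hA3 : IsTKadecKlee I) (hB1 : IsCoerciveWithFstNorm I) (hB2 : IsSuperquadratic I)
    {uk : ℕ → H} (huk : ∀ n, ‖uk n‖ = 1) {u : H} (hlim : Tendsto uk atTop (𝓝 u))
    {w : ℕ → H × W} (hw : ∀ n, IsHalfSpaceMax I (uk n) (w n)) {l : H × W}
    (hl : IsHalfSpaceMax I u l) : Tendsto w atTop (𝓝 l) := by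
  obtain ⟨τ, v, hτ, hlτ⟩ := hl.mem
  -- transplanting `l` to the half-spaces of `uk n` bounds `J (w n)` from below
  have hcomp n : energy I (τ • uk n, v) ≤ energy I (w n) :=
    (hw n).isStrictMaxOn.isMaxOn ⟨τ, v, hτ, rfl⟩
  have hlimE : Tendsto (fun n => energy I (τ • uk n, v)) atTop (𝓝 (energy I l)) := hlτ ▸
    ((continuous_energy hI).tendsto _).comp ((hlim.const_smul τ).prodMk_nhds tendsto_const_nhds)
  refine tendsto_of_subseq_tendsto fun ns hns => ?_
  obtain ⟨c, hc⟩ := (hlimE.comp hns).bddBelow_range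
  obtain ⟨φ, hφ, l', hl', e, hTC, he, hel'⟩ :=
    exists_subseq_tconv hWrefl hA1 hA2 hB1 hB2 (fun n => huk (ns n)) (hlim.comp hns)
      (w := w ∘ ns) (fun n => (hw (ns n)).mem)
      ⟨c, by rintro _ ⟨n, rfl⟩; exact (hc ⟨n, rfl⟩).trans (hcomp _)⟩
  have hle : energy I l ≤ e :=
    le_of_tendsto_of_tendsto' ((hlimE.comp hns).comp hφ.tendsto_atTop) he fun n => hcomp _
  obtain rfl : l' = l := hl.isStrictMaxOn.eq_of_le hl' (hle.trans hel')
  obtain rfl : e = energy I l' := le_antisymm hel' hle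
  exact ⟨φ, hA3.tendsto_of_tendsto_energy hTC he⟩

theorem continuousOn_of_isHalfSpaceMax (hWrefl : Function.Surjective (inclusionInDoubleDual ℝ W))
    (hI : Continuous I) (hA1 : ∀ w, 0 ≤ I w) (hA2 : IsTLowerSemicontinuous I)
    (hA3 : IsTKadecKlee I) (hB1 : IsCoerciveWithFstNorm I) (hB2 : IsSuperquadratic I)
    {F : H → H × W} (hF : ∀ u : H, ‖u‖ = 1 → IsHalfSpaceMax I u (F u)) :
    ContinuousOn F {u | ‖u‖ = 1} := by
  rw [continuousOn_iff_continuous_domRestrict, continuous_iff_seqContinuous]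
  intro x p hx
  exact tendsto_of_isHalfSpaceMax hWrefl hI hA1 hA2 hA3 hB1 hB2 (fun n => (x n).2)
    ((continuous_subtype_val.tendsto p).comp hx) (fun n => hF _ (x n).2) (hF _ p.2)

theorem setOf_isConstrainedCrit_eq (hI : Differentiable ℝ I) (hA1 : ∀ w, 0 ≤ I w)
    (hB3 : SatisfiesNehariPankovIneq I) {u : H} (hu : ‖u‖ = 1) {w₁ w₂ : H × W}
    (h₁ : IsHalfSpaceMax I u w₁) (h₂ : IsHalfSpaceMax I (-u) w₂) :
    {w | (∃ (t : ℝ) (v : W), w = (t • u, v)) ∧ 0 < energy I w ∧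
      IsConstrainedCrit (energy I) u w} = {w₁, w₂} := by
  ext w
  constructor
  · rintro ⟨⟨t, v, rfl⟩, hpos, hcrit⟩
    rcases lt_trichotomy t 0 with ht | rfl | ht
    · right
      rw [show (t • u, v) = ((-t) • -u, v) by simp] at hpos hcrit ⊢
      exact (isHalfSpaceMax_of_isConstrainedCrit hI hB3 (by simpa) (neg_pos.mpr ht) hpos
        (isConstrainedCrit_neg.mpr hcrit)).unique h₂
    · exact absurd hpos (energy_zero_smul_nonpos hA1 u v).not_gt
    · exact .inl ((isHalfSpaceMax_of_isConstrainedCrit hI hB3 hu ht hpos hcrit).unique h₁)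
  · rintro (rfl | rfl)
    · obtain ⟨t, v, -, h⟩ := h₁.mem
      exact ⟨⟨t, v, h⟩, h₁.energy_pos, h₁.isConstrainedCrit hI hA1⟩
    · obtain ⟨t, v, -, h⟩ := h₂.mem
      exact ⟨⟨-t, v, by simp [h]⟩, h₂.energy_pos,
        isConstrainedCrit_neg.mp (h₂.isConstrainedCrit hI hA1)⟩

end Energy

theorem statement0_general
    (I J : H × W → ℝ)
    (hWrefl : Function.Surjective (NormedSpace.inclusionInDoubleDual ℝ W))
    (hJ : ∀ u : H × W, J u = 1 / 2 * ‖u.1‖ ^ 2 - I u)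
    -- (A1)
    (hIC1 : ContDiff ℝ 1 I) (hA1 : ∀ u : H × W, 0 ≤ I u)
    -- (A2)
    (hA2 : ∀ (u : ℕ → H × W) (l : H × W), TConv u l →
      I l ≤ Filter.liminf (fun n => I (u n)) atTop)
    -- (A3)
    (hA3 : ∀ (u : ℕ → H × W) (l : H × W), TConv u l →
      Tendsto (fun n => I (u n)) atTop (𝓝 (I l)) → Tendsto u atTop (𝓝 l))
    -- (A4)
    (r a : ℝ) (hr : 0 < r)
    (ha : a = sInf {c : ℝ | ∃ h : H, ‖h‖ = r ∧ c = J (h, (0 : W))}) (hapos : 0 < a)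
    -- (B1)
    (hB1 : ∀ u : ℕ → H × W, Tendsto (fun n => ‖u n‖) atTop atTop →
      Tendsto (fun n => ‖(u n).1‖ + I (u n)) atTop atTop)
    -- (B2)
    (hB2 : ∀ (t : ℕ → ℝ) (u : ℕ → H × W) (u₀ : H), u₀ ≠ 0 → Tendsto t atTop atTop →
      Tendsto (fun n => (u n).1) atTop (𝓝 u₀) →
      Tendsto (fun n => I (t n • u n) / t n ^ 2) atTop atTop)
    -- (B3)
    (hB3 : ∀ u ∈ NehariPankov J, ∀ t : ℝ, 0 ≤ t → ∀ v : W, t • u + ((0 : H), v) ≠ u →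
      (t ^ 2 - 1) / 2 * fderiv ℝ I u u + t * fderiv ℝ I u ((0 : H), v)
        + I u - I (t • u + ((0 : H), v)) < 0)
    :
    ∃ U₁ U₂ : {u : H // ‖u‖ = 1} → H × W,
      Continuous U₁ ∧ Continuous U₂ ∧
      ∀ u : {u : H // ‖u‖ = 1},
        {w : H × W | (∃ (t : ℝ) (v : W), w = t • (((u : H), (0 : W)) : H × W) + ((0 : H), v)) ∧
            0 < J w ∧
            ∀ (s : ℝ) (v : W),
              fderiv ℝ J w (s • (((u : H), (0 : W)) : H × W) + ((0 : H), v)) = 0}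
          = {U₁ u, U₂ u} ∧
        U₁ u ≠ U₂ u ∧
        (∃ (t₁ : ℝ) (v₁ : W), 0 < t₁ ∧
          U₁ u = t₁ • (((u : H), (0 : W)) : H × W) + ((0 : H), v₁)) ∧
        (∃ (t₂ : ℝ) (v₂ : W), t₂ < 0 ∧
          U₂ u = t₂ • (((u : H), (0 : W)) : H × W) + ((0 : H), v₂)) ∧
        (∀ w : H × W,
          (∃ (t : ℝ) (v : W), 0 ≤ t ∧ w = t • (((u : H), (0 : W)) : H × W) + ((0 : H), v)) →
          w ≠ U₁ u → J w < J (U₁ u)) ∧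
        (∀ w : H × W,
          (∃ (t : ℝ) (v : W), t ≤ 0 ∧ w = t • (((u : H), (0 : W)) : H × W) + ((0 : H), v)) →
          w ≠ U₂ u → J w < J (U₂ u)) := by
  obtain rfl : J = energy I := funext hJ
  have hI : Differentiable ℝ I := hIC1.differentiable one_ne_zero
  have hA4 (h : H) (hh : ‖h‖ = r) : a ≤ energy I (h, 0) :=
    ha ▸ sInf_le_of_sInf_pos (ha ▸ hapos) ⟨h, hh, rfl⟩
  have hmax (u : H) (hu : ‖u‖ = 1) : ∃ w, IsHalfSpaceMax I u w :=
    exists_isHalfSpaceMax hWrefl hI hA1 hA2 hB1 hB2 hB3 hu ⟨(r • u, 0), ⟨r, 0, hr.le, rfl⟩,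
      hapos.trans_le (hA4 _ (by simp [norm_smul, hu, hr.le]))⟩
  choose! F hF using hmax
  have hFc := continuousOn_of_isHalfSpaceMax hWrefl hI.continuous hA1 hA2 hA3 hB1 hB2 hF
  refine ⟨fun u => F u, fun u => F (-u), hFc.comp_continuous continuous_subtype_val Subtype.prop,
    hFc.comp_continuous continuous_subtype_val.neg fun u => by simpa using u.2, fun ⟨u, hu⟩ => ?_⟩
  have hu' : ‖-u‖ = 1 := by simpa using hu
  simp only [smul_mk_zero_add_zero_mk]
  obtain ⟨t₁, v₁, ht₁, h₁⟩ := exists_pos_of_mem_halfSpace hA1 (hF u hu).mem (hF u hu).energy_pos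
  obtain ⟨t₂, v₂, ht₂, h₂⟩ := exists_pos_of_mem_halfSpace hA1 (hF _ hu').mem (hF _ hu').energy_pos
  exact ⟨setOf_isConstrainedCrit_eq hI hA1 hB3 hu (hF u hu) (hF _ hu'),
    (hF u hu).ne_of_neg hA1 (norm_ne_zero_iff.mp (by simp [hu])) (hF _ hu'),
    ⟨t₁, v₁, ht₁, h₁⟩, ⟨-t₂, v₂, by linarith, by simp [h₂]⟩, (hF u hu).isStrictMaxOn,
    fun w hw => (hF _ hu').isStrictMaxOn w (mem_halfSpace_neg.mpr hw)⟩

/-- **Proposition 4.1.** Under (A1)-(A4), (B1)-(B3), for every `u ∈ SX⁺` the functional `J`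
constrained to `ℝu + X̃` has precisely two critical points with positive energy,
`u₁ = t₁u + v₁` and `u₂ = t₂u + v₂` with `t₁ > 0 > t₂`; `u₁` (resp. `u₂`) is the unique
global maximum of `J` on `ℝ⁺u + X̃` (resp. `ℝ⁻u + X̃`), and both depend continuously on `u`. -/
theorem statement0
    (I J : H × W → ℝ)
    (hWrefl : Function.Surjective (NormedSpace.inclusionInDoubleDual ℝ W))
    (hJ : ∀ u : H × W, J u = 1 / 2 * ‖u.1‖ ^ 2 - I u)
    -- (A1)
    (hIC1 : ContDiff ℝ 1 I) (hA1 : ∀ u : H × W, 0 ≤ I u) (hI0 : I 0 = 0)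
    -- (A2)
    (hA2 : ∀ (u : ℕ → H × W) (l : H × W), TConv u l →
      I l ≤ Filter.liminf (fun n => I (u n)) atTop)
    -- (A3)
    (hA3 : ∀ (u : ℕ → H × W) (l : H × W), TConv u l →
      Tendsto (fun n => I (u n)) atTop (𝓝 (I l)) → Tendsto u atTop (𝓝 l))
    -- (A4)
    (r a : ℝ) (hr : 0 < r)
    (ha : a = sInf {c : ℝ | ∃ h : H, ‖h‖ = r ∧ c = J (h, (0 : W))}) (hapos : 0 < a)
    -- (B1)
    (hB1 : ∀ u : ℕ → H × W, Tendsto (fun n => ‖u n‖) atTop atTop →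
      Tendsto (fun n => ‖(u n).1‖ + I (u n)) atTop atTop)
    -- (B2)
    (hB2 : ∀ (t : ℕ → ℝ) (u : ℕ → H × W) (u₀ : H), u₀ ≠ 0 → Tendsto t atTop atTop →
      Tendsto (fun n => (u n).1) atTop (𝓝 u₀) →
      Tendsto (fun n => I (t n • u n) / t n ^ 2) atTop atTop)
    -- (B3)
    (hB3 : ∀ u ∈ NehariPankov J, ∀ t : ℝ, 0 ≤ t → ∀ v : W, t • u + ((0 : H), v) ≠ u →
      (t ^ 2 - 1) / 2 * fderiv ℝ I u u + t * fderiv ℝ I u ((0 : H), v)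
        + I u - I (t • u + ((0 : H), v)) < 0)
    :
    ∃ U₁ U₂ : {u : H // ‖u‖ = 1} → H × W,
      Continuous U₁ ∧ Continuous U₂ ∧
      ∀ u : {u : H // ‖u‖ = 1},
        {w : H × W | (∃ (t : ℝ) (v : W), w = t • (((u : H), (0 : W)) : H × W) + ((0 : H), v)) ∧
            0 < J w ∧
            ∀ (s : ℝ) (v : W),
              fderiv ℝ J w (s • (((u : H), (0 : W)) : H × W) + ((0 : H), v)) = 0}
          = {U₁ u, U₂ u} ∧
        U₁ u ≠ U₂ u ∧
        (∃ (t₁ : ℝ) (v₁ : W), 0 < t₁ ∧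
          U₁ u = t₁ • (((u : H), (0 : W)) : H × W) + ((0 : H), v₁)) ∧
        (∃ (t₂ : ℝ) (v₂ : W), t₂ < 0 ∧
          U₂ u = t₂ • (((u : H), (0 : W)) : H × W) + ((0 : H), v₂)) ∧
        (∀ w : H × W,
          (∃ (t : ℝ) (v : W), 0 ≤ t ∧ w = t • (((u : H), (0 : W)) : H × W) + ((0 : H), v)) →
          w ≠ U₁ u → J w < J (U₁ u)) ∧
        (∀ w : H × W,
          (∃ (t : ℝ) (v : W), t ≤ 0 ∧ w = t • (((u : H), (0 : W)) : H × W) + ((0 : H), v)) →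
          w ≠ U₂ u → J w < J (U₂ u)) :=
  statement0_general I J hWrefl hJ hIC1 hA1 hA2 hA3 r a hr ha hapos hB1 hB2 hB3
end
end

section
/- Assume (A1)-(A4), (B1), (B2) and (B4), and for u ∈ X⁺ let m(u) be the unique point of M with m(u)⁺ = u. Then the composed functional J ∘ m : X⁺ → ℝ is of class C¹, and its derivative is given by (J ∘ m)'(u)[v] = J'(m(u))[v] for every u, v ∈ X⁺, i.e. (J ∘ m)'(u) is the restriction of J'(m(u)) to X⁺. -/
/-!
By (B4), `m h` is the unique minimiser of `I`, hence the unique maximiser of `J`, on the fiber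
`{h} × W`.

`m` is continuous: if `hₙ → h`, then `I (m hₙ) ≤ I (hₙ, (m h).2) → I (m h)`, so (B1) bounds
`m hₙ`, and reflexivity of `W` gives a subsequence T-converging to some `(h, w)`. By (A2) and
minimality, `I (h, w) ≤ liminf I (m hₙ) ≤ limsup I (m hₙ) ≤ I (m h) ≤ I (h, w)`, so uniqueness
of the minimiser gives `(h, w) = m h` and (A3) upgrades the convergence to norm convergence.

`J ∘ m` is `C¹` by an envelope argument: `J (m (h + v)) - J (m h)` lies between the increments
of `J` from `h` to `h + v` along the fibers through `m h` and through `m (h + v)`. Both are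
`J'(m h)[(v, 0)] + o(‖v‖)`, by strict differentiability of `J` at `m h` and continuity of `m`,
which also makes the derivative `h ↦ J'(m h) ∘ inl` continuous.
-/

open Filter Topology

noncomputable section

variable {H W : Type*} [NormedAddCommGroup H] [InnerProductSpace ℝ H] [CompleteSpace H]
  [NormedAddCommGroup W] [NormedSpace ℝ W] [CompleteSpace W]

section WeakCompactness

variable {E : Type*} [NormedAddCommGroup E] [NormedSpace ℝ E]

theorem MapClusterPt.eq_of_tendsto {X ι : Type*} [TopologicalSpace X] [T2Space X]
    {l : Filter ι} {u : ι → X} {x y : X} (hx : MapClusterPt x l u) (hy : Tendsto u l (𝓝 y)) :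
    x = y :=
  eq_of_nhds_neBot (hx.clusterPt.mono hy)

theorem exists_subseq_forall_tendsto_of_abs_le {x : ℕ → ℕ → ℝ} {B : ℕ → ℝ}
    (hx : ∀ n k, |x n k| ≤ B k) :
    ∃ (p : ℕ → ℝ) (ψ : ℕ → ℕ), StrictMono ψ ∧
      ∀ k, Tendsto (fun n => x (ψ n) k) atTop (𝓝 (p k)) := by
  have hK : IsCompact (Set.univ.pi fun k => Set.Icc (-B k) (B k)) :=
    isCompact_univ_pi fun _ => isCompact_Icc
  obtain ⟨p, -, ψ, hψ, hp⟩ :=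
    hK.isSeqCompact fun n => Set.mem_univ_pi.2 fun k => abs_le.1 (hx n k)
  exact ⟨p, ψ, hψ, tendsto_pi_nhds.1 hp⟩

theorem TopologicalSpace.IsSeparable.exists_dual_seq_separating {s : Set E}
    (hs : TopologicalSpace.IsSeparable s) :
    ∃ φ : ℕ → StrongDual ℝ E, ∀ x ∈ s, (∀ n, φ n x = 0) → x = 0 := by
  obtain ⟨c, hc, hsc⟩ := hs
  rcases c.eq_empty_or_nonempty with rfl | hne
  · exact ⟨0, fun x hx => by simpa using hsc hx⟩
  obtain ⟨y, rfl⟩ := hc.exists_eq_range hne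
  choose φ hφ_norm hφ_y using fun n => exists_dual_vector'' ℝ (y n)
  refine ⟨φ, fun x hx hφx => ?_⟩
  by_contra hx0
  have hx_pos : 0 < ‖x‖ := norm_pos_iff.2 hx0
  obtain ⟨_, ⟨n, rfl⟩, hn⟩ := Metric.mem_closure_iff.1 (hsc hx) (‖x‖ / 2) (half_pos hx_pos)
  -- `φ n` norms `y n` and kills `x`, so `y n` cannot be close to `x`
  have hyn : ‖y n‖ < ‖x‖ / 2 :=
    calc ‖y n‖ = φ n (y n - x) := by rw [map_sub, hφx, sub_zero, hφ_y]; rfl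
      _ ≤ ‖y n - x‖ := (le_abs_self _).trans ((φ n).le_of_opNorm_le (hφ_norm n) _ |>.trans_eq
          (one_mul _))
      _ < ‖x‖ / 2 := by rwa [← dist_eq_norm, dist_comm]
  have := norm_le_norm_add_norm_sub' x (y n)
  rw [← dist_eq_norm] at this
  linarith

theorem Submodule.exists_dual_eq_zero_of_notMem (S : Submodule ℝ E) (hS : IsClosed (S : Set E))
    {x : E} (hx : x ∉ S) : ∃ φ : StrongDual ℝ E, (∀ y ∈ S, φ y = 0) ∧ φ x ≠ 0 := by
  have := hS
  obtain ⟨f, hf⟩ := SeparatingDual.exists_ne_zero (R := ℝ) (x := S.mkQ x)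
    (by simpa [Submodule.Quotient.mk_eq_zero] using hx)
  exact ⟨f.comp S.mkQL, fun y hy => by simp [(Submodule.Quotient.mk_eq_zero S).2 hy], hf⟩

def IsWeakClusterPt (x : ℕ → E) (l : E) : Prop :=
  ∀ φ : StrongDual ℝ E, MapClusterPt (φ l) atTop fun n => φ (x n)

theorem Submodule.mem_of_isWeakClusterPt (S : Submodule ℝ E) (hS : IsClosed (S : Set E))
    {x : ℕ → E} (hxS : ∀ n, x n ∈ S) {l : E} (hl : IsWeakClusterPt x l) : l ∈ S := by
  by_contra hlS
  obtain ⟨φ, hφS, hφl⟩ := S.exists_dual_eq_zero_of_notMem hS hlS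
  exact hφl <| isClosed_singleton.mem_of_mapClusterPt (hl φ)
    (Eventually.of_forall fun n => hφS _ (hxS n))

/- Banach–Alaoglu in the bidual, which is `E` itself. -/
theorem exists_tendsto_weak_of_isWeakClusterPt_unique
    (hE : Function.Surjective (NormedSpace.inclusionInDoubleDual ℝ E))
    {x : ℕ → E} {C : ℝ} (hx : ∀ n, ‖x n‖ ≤ C)
    (huniq : ∀ l l', IsWeakClusterPt x l → IsWeakClusterPt x l' → l = l') :
    ∃ l : E, ∀ φ : StrongDual ℝ E, Tendsto (fun n => φ (x n)) atTop (𝓝 (φ l)) := by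
  set ι := NormedSpace.inclusionInDoubleDual ℝ E
  set u : ℕ → WeakDual ℝ (StrongDual ℝ E) := fun n => StrongDual.toWeakDual (ι (x n))
  have hK := WeakDual.isCompact_closedBall (𝕜 := ℝ) (0 : StrongDual ℝ (StrongDual ℝ E)) C
  have huK : ∀ n, u n ∈ WeakDual.toStrongDual ⁻¹' Metric.closedBall 0 C := fun n => by
    simp only [Set.mem_preimage, Metric.mem_closedBall]
    exact (dist_zero_right (ι (x n))).trans_le ((NormedSpace.double_dual_bound ℝ E _).trans (hx n))
  have heval : ∀ l, MapClusterPt (StrongDual.toWeakDual (ι l)) atTop u → IsWeakClusterPt x l :=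
    fun l h φ => h.continuousAt_comp (f := fun F => F φ) (WeakDual.eval_continuous φ).continuousAt
  obtain ⟨F₀, -, hF₀⟩ := hK.exists_mapClusterPt (f := atTop) (u := u)
    (le_principal_iff.2 (mem_map.2 (Eventually.of_forall huK)))
  obtain ⟨l₀, hl₀⟩ := hE (WeakDual.toStrongDual F₀)
  have hF₀l₀ : F₀ = StrongDual.toWeakDual (ι l₀) := hl₀.symm
  subst hF₀l₀
  have hu : Tendsto u atTop (𝓝 (StrongDual.toWeakDual (ι l₀))) := by
    refine hK.tendsto_nhds_of_unique_mapClusterPt (Eventually.of_forall huK) fun F _ hF => ?_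
    obtain ⟨l, rfl⟩ := hE (WeakDual.toStrongDual F)
    rw [huniq l l₀ (heval l hF) (heval l₀ hF₀)]
    rfl
  exact ⟨l₀, fun φ => ((WeakDual.eval_continuous φ).tendsto _).comp hu⟩

/- Along a diagonal subsequence, countably many functionals separating the closed span of the
sequence converge; they pin down the weak cluster point. -/
theorem exists_subseq_tendsto_weak
    (hE : Function.Surjective (NormedSpace.inclusionInDoubleDual ℝ E))
    {x : ℕ → E} {C : ℝ} (hx : ∀ n, ‖x n‖ ≤ C) :
    ∃ (l : E) (ψ : ℕ → ℕ), StrictMono ψ ∧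
      ∀ φ : StrongDual ℝ E, Tendsto (fun k => φ (x (ψ k))) atTop (𝓝 (φ l)) := by
  set S := (Submodule.span ℝ (Set.range x)).topologicalClosure
  have hS : IsClosed (S : Set E) := Submodule.isClosed_topologicalClosure _
  have hxS : ∀ n, x n ∈ S := fun n =>
    Submodule.le_topologicalClosure _ (Submodule.subset_span (Set.mem_range_self n))
  obtain ⟨φs, hφs⟩ : ∃ φ : ℕ → StrongDual ℝ E, ∀ y ∈ S, (∀ n, φ n y = 0) → y = 0 := by
    refine TopologicalSpace.IsSeparable.exists_dual_seq_separating ?_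
    rw [Submodule.topologicalClosure_coe]
    exact ((Set.countable_range x).isSeparable.span (R := ℝ)).closure
  obtain ⟨p, ψ, hψ, hp⟩ := exists_subseq_forall_tendsto_of_abs_le (x := fun n k => φs k (x n))
    (B := fun k => ‖φs k‖ * C) fun n k => ((φs k).le_opNorm _).trans (by gcongr; exact hx n)
  obtain ⟨l, hl⟩ := exists_tendsto_weak_of_isWeakClusterPt_unique hE (x := x ∘ ψ)
    (fun k => hx (ψ k)) fun l l' hl hl' => by
      have hmem := fun {l} (h : IsWeakClusterPt (x ∘ ψ) l) =>
        S.mem_of_isWeakClusterPt hS (fun k => hxS (ψ k)) h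
      refine sub_eq_zero.1 <| hφs _ (S.sub_mem (hmem hl) (hmem hl')) fun k => ?_
      rw [map_sub, (hl (φs k)).eq_of_tendsto (hp k), (hl' (φs k)).eq_of_tendsto (hp k), sub_self]
  exact ⟨l, ψ, hψ, hl⟩

end WeakCompactness

theorem Asymptotics.IsLittleO.of_le_of_le {α β : Type*} [Norm β] {l : Filter α}
    {a b g : α → ℝ} {k : α → β} (ha : a =o[l] k) (hb : b =o[l] k) (hag : ∀ x, a x ≤ g x)
    (hgb : ∀ x, g x ≤ b x) :
    g =o[l] k := by
  refine (Asymptotics.isBigO_of_le (g := fun x => ‖a x‖ + ‖b x‖) l fun x => ?_).trans_isLittleO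
    (ha.norm_left.add hb.norm_left)
  simp only [Real.norm_eq_abs]
  exact (abs_le.2 ⟨by linarith [hag x, neg_abs_le (a x), abs_nonneg (b x)],
    by linarith [hgb x, le_abs_self (b x), abs_nonneg (a x)]⟩).trans (le_abs_self _)

section Envelope

variable {E F G : Type*} [NormedAddCommGroup E] [NormedSpace ℝ E] [NormedAddCommGroup F]
  [NormedSpace ℝ F] [NormedAddCommGroup G] [NormedSpace ℝ G]

theorem HasStrictFDerivAt.isLittleO_sub_fst {f : E × F → G} {L : E × F →L[ℝ] G} {x₀ : E} {y₀ : F}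
    (hf : HasStrictFDerivAt f L (x₀, y₀)) {y : E → F} (hy : Tendsto y (𝓝 0) (𝓝 y₀)) :
    (fun v => f (x₀ + v, y v) - f (x₀, y v) - L (v, 0)) =o[𝓝 0] fun v => v := by
  have hp : Tendsto (fun v => ((x₀ + v, y v), (x₀, y v))) (𝓝 0) (𝓝 ((x₀, y₀), (x₀, y₀))) := by
    refine ((Tendsto.prodMk_nhds ?_ hy).prodMk_nhds (tendsto_const_nhds.prodMk_nhds hy))
    simpa using (tendsto_id (x := 𝓝 (0 : E))).const_add x₀
  refine ((hf.isLittleO.comp_tendsto hp).trans_isBigO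
    (Asymptotics.isBigO_of_le (g := fun v : E => v) _ fun v => by simp)).congr_left fun v => ?_
  simp only [Function.comp_apply, Prod.mk_sub_mk, add_sub_cancel_left, sub_self]

theorem HasStrictFDerivAt.hasFDerivAt_comp_of_fiberwise_max {f : E × F → ℝ} {L : E × F →L[ℝ] ℝ}
    {m : E → E × F} {x₀ : E} (hf : HasStrictFDerivAt f L (m x₀)) (hm : ContinuousAt m x₀)
    (hm_fst : ∀ x, (m x).1 = x) (hmax : ∀ x y, f (x, y) ≤ f (m x)) :
    HasFDerivAt (fun x => f (m x)) (L.comp (ContinuousLinearMap.inl ℝ E F)) x₀ := by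
  have hm_eq : ∀ x, m x = (x, (m x).2) := fun x => Prod.ext (hm_fst x) rfl
  rw [hm_eq x₀] at hf
  have hsnd : Tendsto (fun v => (m (x₀ + v)).2) (𝓝 0) (𝓝 (m x₀).2) := by
    refine (continuous_snd.tendsto _).comp (hm.tendsto.comp ?_)
    simpa using (tendsto_id (x := 𝓝 (0 : E))).const_add x₀
  rw [hasFDerivAt_iff_isLittleO_nhds_zero]
  refine (hf.isLittleO_sub_fst tendsto_const_nhds).of_le_of_le (hf.isLittleO_sub_fst hsnd)
    (fun v => ?_) fun v => ?_
  · have := hmax (x₀ + v) (m x₀).2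
    have h₀ : f (x₀, (m x₀).2) = f (m x₀) := congrArg f (hm_eq x₀).symm
    simp only [ContinuousLinearMap.comp_apply, ContinuousLinearMap.inl_apply]
    linarith
  · have := hmax x₀ (m (x₀ + v)).2
    have hv : f (x₀ + v, (m (x₀ + v)).2) = f (m (x₀ + v)) := congrArg f (hm_eq (x₀ + v)).symm
    simp only [ContinuousLinearMap.comp_apply, ContinuousLinearMap.inl_apply]
    linarith

end Envelope

theorem exists_norm_le_of_le_of_coercive {X : Type*} [Norm X] {g : X → ℝ}
    (hg : ∀ u : ℕ → X, Tendsto (fun n => ‖u n‖) atTop atTop →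
      Tendsto (fun n => g (u n)) atTop atTop)
    {u : ℕ → X} {B : ℝ} (hu : ∀ n, g (u n) ≤ B) : ∃ C, ∀ n, ‖u n‖ ≤ C := by
  by_contra! h
  choose k hk using h
  have hv : Tendsto (fun j : ℕ => ‖u (k j)‖) atTop atTop :=
    tendsto_atTop_mono (fun j => (hk j).le) tendsto_natCast_atTop_atTop
  obtain ⟨j, hj⟩ := ((hg _ hv).eventually_gt_atTop B).exists
  exact (hu (k j)).not_gt hj

theorem tendsto_of_le_tendsto_of_le_liminf {f b : ℕ → ℝ} {c : ℝ}
    (hf : IsBoundedUnder (· ≥ ·) atTop f) (hfb : ∀ n, f n ≤ b n) (hb : Tendsto b atTop (𝓝 c))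
    (hc : c ≤ liminf f atTop) : Tendsto f atTop (𝓝 c) := by
  have hf' : IsBoundedUnder (· ≤ ·) atTop f :=
    hb.isBoundedUnder_le.mono_le (Eventually.of_forall hfb)
  refine tendsto_of_le_liminf_of_limsup_le hc ?_ hf' hf
  rw [← hb.limsup_eq]
  exact limsup_le_limsup (Eventually.of_forall hfb) hf.isCoboundedUnder_le hb.isBoundedUnder_le

theorem fiberwise_le_of_lt {E F : Type*} {I : E × F → ℝ} {m : E → E × F}
    (hm_fst : ∀ x, (m x).1 = x)
    (hlt : ∀ x y, y ≠ (m x).2 → I (m x) < I (x, y)) (x : E) (y : F) : I (m x) ≤ I (x, y) := by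
  rcases eq_or_ne y (m x).2 with rfl | hy
  · exact (congrArg I (show m x = (x, (m x).2) from Prod.ext (hm_fst x) rfl)).le
  · exact (hlt x y hy).le

section Continuity

variable {E F : Type*} [NormedAddCommGroup E] [NormedAddCommGroup F] [NormedSpace ℝ F]
  {I : E × F → ℝ} {m : E → E × F}

theorem continuous_of_fiberwise_min
    (hrefl : Function.Surjective (NormedSpace.inclusionInDoubleDual ℝ F))
    (hI : Continuous I) (hI_nonneg : ∀ u, 0 ≤ I u)
    (hI_lsc : ∀ (u : ℕ → E × F) (l : E × F), TConv u l → I l ≤ liminf (fun n => I (u n)) atTop)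
    (hI_strong : ∀ (u : ℕ → E × F) (l : E × F), TConv u l →
      Tendsto (fun n => I (u n)) atTop (𝓝 (I l)) → Tendsto u atTop (𝓝 l))
    (hcoercive : ∀ u : ℕ → E × F, Tendsto (fun n => ‖u n‖) atTop atTop →
      Tendsto (fun n => ‖(u n).1‖ + I (u n)) atTop atTop)
    (hm_fst : ∀ h, (m h).1 = h) (hlt : ∀ h w, w ≠ (m h).2 → I (m h) < I (h, w)) :
    Continuous m := by
  have hle := fiberwise_le_of_lt hm_fst hlt
  refine continuous_iff_seqContinuous.2 fun x₀ p hx₀ => tendsto_of_subseq_tendsto fun ns hns => ?_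
  set x := fun n => x₀ (ns n)
  have hx : Tendsto x atTop (𝓝 p) := hx₀.comp hns
  have hb : Tendsto (fun n => I (x n, (m p).2)) atTop (𝓝 (I (m p))) := by
    rw [show m p = (p, (m p).2) from Prod.ext (hm_fst p) rfl]
    exact (hI.tendsto _).comp (hx.prodMk_nhds tendsto_const_nhds)
  obtain ⟨B₁, hB₁⟩ := hb.bddAbove_range
  obtain ⟨B₂, hB₂⟩ := hx.norm.bddAbove_range
  obtain ⟨C, hC⟩ := exists_norm_le_of_le_of_coercive (g := fun q => ‖q.1‖ + I q) hcoercive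
    (u := fun n => m (x n)) (B := B₂ + B₁) fun n => by
      rw [hm_fst]
      exact add_le_add (hB₂ ⟨n, rfl⟩) ((hle _ _).trans (hB₁ ⟨n, rfl⟩))
  obtain ⟨w, ψ, hψ, hw⟩ := exists_subseq_tendsto_weak hrefl (x := fun n => (m (x n)).2)
    fun n => (norm_snd_le _).trans (hC n)
  have hT : TConv (fun k => m (x (ψ k))) (p, w) :=
    ⟨by simp only [hm_fst]; exact hx.comp hψ.tendsto_atTop, hw⟩
  have hlim : Tendsto (fun k => I (m (x (ψ k)))) atTop (𝓝 (I (m p))) :=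
    tendsto_of_le_tendsto_of_le_liminf (isBoundedUnder_of ⟨0, fun k => hI_nonneg _⟩)
      (fun k => hle _ _) (hb.comp hψ.tendsto_atTop) ((hle p w).trans (hI_lsc _ _ hT))
  have hpw : (p, w) = m p := by
    refine Prod.ext (hm_fst p).symm (by_contra fun hne => ?_)
    have := hI_lsc _ _ hT
    rw [hlim.liminf_eq] at this
    exact (hlt p w hne).not_ge this
  rw [← hpw] at hlim ⊢
  exact ⟨ψ, hI_strong _ _ hT hlim⟩

end Continuity

theorem statement10_general
    (I J : H × W → ℝ)
    (hWrefl : Function.Surjective (NormedSpace.inclusionInDoubleDual ℝ W))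
    (hJ : ∀ u : H × W, J u = 1 / 2 * ‖u.1‖ ^ 2 - I u)
    -- (A1)
    (hIC1 : ContDiff ℝ 1 I) (hA1 : ∀ u : H × W, 0 ≤ I u)
    -- (A2)
    (hA2 : ∀ (u : ℕ → H × W) (l : H × W), TConv u l →
      I l ≤ Filter.liminf (fun n => I (u n)) atTop)
    -- (A3)
    (hA3 : ∀ (u : ℕ → H × W) (l : H × W), TConv u l →
      Tendsto (fun n => I (u n)) atTop (𝓝 (I l)) → Tendsto u atTop (𝓝 l))
    -- (B1)
    (hB1 : ∀ u : ℕ → H × W, Tendsto (fun n => ‖u n‖) atTop atTop →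
      Tendsto (fun n => ‖(u n).1‖ + I (u n)) atTop atTop)
    -- (B4)
    (hB4 : ∀ u ∈ NatConstraint I, ∀ v : W, v ≠ 0 → I u < I (u + ((0 : H), v)))
    -- `m(h)` is the unique point of `M` above `h ∈ X⁺`
    (m : H → H × W)
    (hm : ∀ h : H, (m h ∈ NatConstraint I ∧ (m h).1 = h) ∧
      ∀ w : H × W, w ∈ NatConstraint I ∧ w.1 = h → w = m h) :
    ContDiff ℝ 1 (fun h : H => J (m h)) ∧
      ∀ u v : H, fderiv ℝ (fun h : H => J (m h)) u v = fderiv ℝ J (m u) (v, (0 : W)) := by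
  have hm_fst : ∀ h, (m h).1 = h := fun h => (hm h).1.2
  have hlt : ∀ h w, w ≠ (m h).2 → I (m h) < I (h, w) := fun h w hw => by
    have := hB4 (m h) (hm h).1.1 (w - (m h).2) (sub_ne_zero.2 hw)
    rwa [show m h + ((0 : H), w - (m h).2) = (h, w) from Prod.ext (by simp [hm_fst]) (by simp)]
      at this
  have hmc : Continuous m :=
    continuous_of_fiberwise_min hWrefl hIC1.continuous hA1 hA2 hA3 hB1 hm_fst hlt
  have hJC1 : ContDiff ℝ 1 J := by
    rw [show J = fun u => 1 / 2 * ‖u.1‖ ^ 2 - I u from funext hJ]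
    exact (contDiff_const.mul (contDiff_fst.norm_sq ℝ)).sub hIC1
  have hJmax : ∀ h w, J (h, w) ≤ J (m h) := fun h w => by
    rw [hJ, hJ, hm_fst]
    linarith [fiberwise_le_of_lt hm_fst hlt h w]
  have hderiv : ∀ u, HasFDerivAt (fun h => J (m h))
      ((fderiv ℝ J (m u)).comp (ContinuousLinearMap.inl ℝ H W)) u := fun u =>
    (hJC1.contDiffAt.hasStrictFDerivAt one_ne_zero).hasFDerivAt_comp_of_fiberwise_max
      hmc.continuousAt hm_fst hJmax
  refine ⟨contDiff_one_iff_hasFDerivAt.2 ⟨_, ?_, hderiv⟩, fun u v => by simp [(hderiv u).fderiv]⟩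
  exact ((ContinuousLinearMap.compL ℝ H (H × W) ℝ).flip
    (ContinuousLinearMap.inl ℝ H W)).continuous.comp ((hJC1.continuous_fderiv one_ne_zero).comp hmc)

/-- **Claims (ii) and (iii) of Theorem 4.6.** Under (A1)-(A4), (B1), (B2), (B4), with `m(u)`
the unique point of `M` above `u ∈ X⁺`, the functional `J ∘ m : X⁺ → ℝ` is of class `C¹` and
`(J ∘ m)'(u)[v] = J'(m(u))[v]` for all `u, v ∈ X⁺`. -/
theorem statement10
    (I J : H × W → ℝ)
    (hWrefl : Function.Surjective (NormedSpace.inclusionInDoubleDual ℝ W))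
    (hJ : ∀ u : H × W, J u = 1 / 2 * ‖u.1‖ ^ 2 - I u)
    -- (A1)
    (hIC1 : ContDiff ℝ 1 I) (hA1 : ∀ u : H × W, 0 ≤ I u) (hI0 : I 0 = 0)
    -- (A2)
    (hA2 : ∀ (u : ℕ → H × W) (l : H × W), TConv u l →
      I l ≤ Filter.liminf (fun n => I (u n)) atTop)
    -- (A3)
    (hA3 : ∀ (u : ℕ → H × W) (l : H × W), TConv u l →
      Tendsto (fun n => I (u n)) atTop (𝓝 (I l)) → Tendsto u atTop (𝓝 l))
    -- (A4)
    (r a : ℝ) (hr : 0 < r)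
    (ha : a = sInf {c : ℝ | ∃ h : H, ‖h‖ = r ∧ c = J (h, (0 : W))}) (hapos : 0 < a)
    -- (B1)
    (hB1 : ∀ u : ℕ → H × W, Tendsto (fun n => ‖u n‖) atTop atTop →
      Tendsto (fun n => ‖(u n).1‖ + I (u n)) atTop atTop)
    -- (B2)
    (hB2 : ∀ (t : ℕ → ℝ) (u : ℕ → H × W) (u₀ : H), u₀ ≠ 0 → Tendsto t atTop atTop →
      Tendsto (fun n => (u n).1) atTop (𝓝 u₀) →
      Tendsto (fun n => I (t n • u n) / t n ^ 2) atTop atTop)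
    -- (B4)
    (hB4 : ∀ u ∈ NatConstraint I, ∀ v : W, v ≠ 0 → I u < I (u + ((0 : H), v)))
    -- `m(h)` is the unique point of `M` above `h ∈ X⁺`
    (m : H → H × W)
    (hm : ∀ h : H, (m h ∈ NatConstraint I ∧ (m h).1 = h) ∧
      ∀ w : H × W, w ∈ NatConstraint I ∧ w.1 = h → w = m h) :
    ContDiff ℝ 1 (fun h : H => J (m h)) ∧
      ∀ u v : H, fderiv ℝ (fun h : H => J (m h)) u v = fderiv ℝ J (m u) (v, (0 : W)) :=
  statement10_general I J hWrefl hJ hIC1 hA1 hA2 hA3 hB1 hB4 m hm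
end
end

section
/- Assume (A1)-(A4), (B1), (B2) and (B4), and for u ∈ X⁺ let m(u) be the unique point of M with m(u)⁺ = u. Then J ∘ m has the mountain pass geometry: (J ∘ m)(u) ≥ J(u) ≥ a > 0 for every u ∈ X⁺ with ‖u‖ = r, and for every u ∈ X⁺ with u ≠ 0 one has (J ∘ m)(tu) = ½‖m(tu)⁺‖² − I(m(tu)) → −∞ as t → ∞. -/
/-! Since `m(u)` lies on the natural constraint `M`, (B4) compares it with the point
`(m(u)⁺, 0)` of the same fibre: `I(m(u)) ≤ I(u, 0)`, hence `J(m(u)) ≥ J(u, 0) ≥ a`.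
Along the ray `t ↦ tu`, the rescaled points `t⁻¹ m(tu)` all have `X⁺`-component `u`, so (B2)
makes `I(m(tu))/t²` blow up, and therefore `J(m(tu)) = t² (½‖u‖² - I(m(tu))/t²) → -∞`. -/

open Filter Topology

noncomputable section

variable {H W : Type*} [NormedAddCommGroup H] [InnerProductSpace ℝ H] [CompleteSpace H]
  [NormedAddCommGroup W] [NormedSpace ℝ W] [CompleteSpace W]

/-- `sInf` of a set of reals that is not bounded below is `0`. -/
lemma Real.sInf_le_of_mem_of_sInf_pos {s : Set ℝ} {x : ℝ} (hx : x ∈ s) (hpos : 0 < sInf s) :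
    sInf s ≤ x := by
  refine csInf_le ?_ hx
  by_contra hbdd
  rw [Real.sInf_of_not_bddBelow hbdd] at hpos
  exact lt_irrefl 0 hpos

lemma tendsto_atBot_of_div_sq_tendsto_atBot {f : ℝ → ℝ}
    (hf : Tendsto (fun t => f t / t ^ 2) atTop atBot) : Tendsto f atTop atBot := by
  refine tendsto_atBot_mono' atTop ?_ hf
  filter_upwards [eventually_ge_atTop 1, hf.eventually_le_atBot 0] with t ht hneg
  have ht2 : 1 ≤ t ^ 2 := one_le_pow₀ ht
  calc f t = t ^ 2 * (f t / t ^ 2) := by field_simp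
    _ ≤ f t / t ^ 2 := by nlinarith

lemma apply_le_apply_fst_of_mem_natConstraint {E F : Type*} [NormedAddCommGroup E]
    [InnerProductSpace ℝ E] [NormedAddCommGroup F] [NormedSpace ℝ F] {I : E × F → ℝ}
    (hB4 : ∀ u ∈ NatConstraint I, ∀ v : F, v ≠ 0 → I u < I (u + ((0 : E), v)))
    {u : E × F} (hu : u ∈ NatConstraint I) : I u ≤ I (u.1, 0) := by
  rcases eq_or_ne u.2 0 with h | h
  · rw [← h]
  · have hfibre : u + ((0 : E), -u.2) = (u.1, 0) := by ext <;> simp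
    exact hfibre ▸ (hB4 u hu (-u.2) (neg_ne_zero.mpr h)).le

/-- (B2) is applied to the rescaled sequences `(xₙ)⁻¹ • w(xₙ)`, whose first components are
constantly `u₀`. -/
lemma tendsto_apply_div_sq_atTop {E F : Type*} [NormedAddCommGroup E] [NormedSpace ℝ E]
    [AddCommGroup F] [Module ℝ F] {I : E × F → ℝ}
    (hB2 : ∀ (t : ℕ → ℝ) (u : ℕ → E × F) (u₀ : E), u₀ ≠ 0 → Tendsto t atTop atTop →
      Tendsto (fun n => (u n).1) atTop (𝓝 u₀) →
      Tendsto (fun n => I (t n • u n) / t n ^ 2) atTop atTop)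
    {u₀ : E} (hu₀ : u₀ ≠ 0) {w : ℝ → E × F} (hw : ∀ t, (w t).1 = t • u₀) :
    Tendsto (fun t => I (w t) / t ^ 2) atTop atTop := by
  rw [tendsto_iff_seq_tendsto]
  intro x hx
  have hx0 : ∀ᶠ n in atTop, x n ≠ 0 := (hx.eventually_gt_atTop 0).mono fun _ h => h.ne'
  have hfst : Tendsto (fun n => ((x n)⁻¹ • w (x n)).1) atTop (𝓝 u₀) := by
    refine tendsto_const_nhds.congr' (hx0.mono fun n hn => ?_)
    simp only [Prod.smul_fst, hw, inv_smul_smul₀ hn]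
  refine (hB2 x _ u₀ hu₀ hx hfst).congr' (hx0.mono fun n hn => ?_)
  simp only [Function.comp_apply, smul_inv_smul₀ hn]

theorem statement12_general
    (I J : H × W → ℝ)
    (hJ : ∀ u : H × W, J u = 1 / 2 * ‖u.1‖ ^ 2 - I u)
    -- (A4)
    (r a : ℝ)
    (ha : a = sInf {c : ℝ | ∃ h : H, ‖h‖ = r ∧ c = J (h, (0 : W))}) (hapos : 0 < a)
    -- (B2)
    (hB2 : ∀ (t : ℕ → ℝ) (u : ℕ → H × W) (u₀ : H), u₀ ≠ 0 → Tendsto t atTop atTop →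
      Tendsto (fun n => (u n).1) atTop (𝓝 u₀) →
      Tendsto (fun n => I (t n • u n) / t n ^ 2) atTop atTop)
    -- (B4)
    (hB4 : ∀ u ∈ NatConstraint I, ∀ v : W, v ≠ 0 → I u < I (u + ((0 : H), v)))
    -- `m(h)` is the unique point of `M` above `h ∈ X⁺`
    (m : H → H × W)
    (hm : ∀ h : H, (m h ∈ NatConstraint I ∧ (m h).1 = h) ∧
      ∀ w : H × W, w ∈ NatConstraint I ∧ w.1 = h → w = m h) :
    (∀ u : H, ‖u‖ = r → a ≤ J ((u, (0 : W)) : H × W) ∧ J ((u, (0 : W)) : H × W) ≤ J (m u)) ∧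
      ∀ u : H, u ≠ 0 → Tendsto (fun t : ℝ => J (m (t • u))) atTop atBot := by
  obtain rfl : J = fun u => 1 / 2 * ‖u.1‖ ^ 2 - I u := funext hJ
  refine ⟨fun u hur => ⟨?_, ?_⟩, fun u hu => ?_⟩
  · subst ha
    exact Real.sInf_le_of_mem_of_sInf_pos ⟨u, hur, rfl⟩ hapos
  · have hI := apply_le_apply_fst_of_mem_natConstraint hB4 (hm u).1.1
    simp only [(hm u).1.2] at hI ⊢
    linarith
  · have hI := tendsto_apply_div_sq_atTop hB2 hu fun t => (hm (t • u)).1.2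
    refine tendsto_atBot_of_div_sq_tendsto_atBot ?_
    refine (tendsto_atBot_add_const_left _ (1 / 2 * ‖u‖ ^ 2)
      (tendsto_neg_atTop_atBot.comp hI)).congr' ?_
    filter_upwards [eventually_ne_atTop 0] with t ht
    simp only [Function.comp_apply, (hm (t • u)).1.2, norm_smul, Real.norm_eq_abs, mul_pow,
      sq_abs]
    field_simp
    ring

/-- **Mountain pass geometry of `J ∘ m` (Theorem 4.6).** Under (A1)-(A4), (B1), (B2), (B4),
with `m(u)` the unique point of `M` above `u ∈ X⁺`: `(J ∘ m)(u) ≥ J(u) ≥ a > 0` whenever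
`‖u‖ = r`, and `(J ∘ m)(tu) → -∞` as `t → ∞` for every `u ∈ X⁺ \ {0}`. -/
theorem statement12
    (I J : H × W → ℝ)
    (hWrefl : Function.Surjective (NormedSpace.inclusionInDoubleDual ℝ W))
    (hJ : ∀ u : H × W, J u = 1 / 2 * ‖u.1‖ ^ 2 - I u)
    -- (A1)
    (hIC1 : ContDiff ℝ 1 I) (hA1 : ∀ u : H × W, 0 ≤ I u) (hI0 : I 0 = 0)
    -- (A2)
    (hA2 : ∀ (u : ℕ → H × W) (l : H × W), TConv u l →
      I l ≤ Filter.liminf (fun n => I (u n)) atTop)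
    -- (A3)
    (hA3 : ∀ (u : ℕ → H × W) (l : H × W), TConv u l →
      Tendsto (fun n => I (u n)) atTop (𝓝 (I l)) → Tendsto u atTop (𝓝 l))
    -- (A4)
    (r a : ℝ) (hr : 0 < r)
    (ha : a = sInf {c : ℝ | ∃ h : H, ‖h‖ = r ∧ c = J (h, (0 : W))}) (hapos : 0 < a)
    -- (B1)
    (hB1 : ∀ u : ℕ → H × W, Tendsto (fun n => ‖u n‖) atTop atTop →
      Tendsto (fun n => ‖(u n).1‖ + I (u n)) atTop atTop)
    -- (B2)
    (hB2 : ∀ (t : ℕ → ℝ) (u : ℕ → H × W) (u₀ : H), u₀ ≠ 0 → Tendsto t atTop atTop →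
      Tendsto (fun n => (u n).1) atTop (𝓝 u₀) →
      Tendsto (fun n => I (t n • u n) / t n ^ 2) atTop atTop)
    -- (B4)
    (hB4 : ∀ u ∈ NatConstraint I, ∀ v : W, v ≠ 0 → I u < I (u + ((0 : H), v)))
    -- `m(h)` is the unique point of `M` above `h ∈ X⁺`
    (m : H → H × W)
    (hm : ∀ h : H, (m h ∈ NatConstraint I ∧ (m h).1 = h) ∧
      ∀ w : H × W, w ∈ NatConstraint I ∧ w.1 = h → w = m h) :
    (∀ u : H, ‖u‖ = r → a ≤ J ((u, (0 : W)) : H × W) ∧ J ((u, (0 : W)) : H × W) ≤ J (m u)) ∧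
      ∀ u : H, u ≠ 0 → Tendsto (fun t : ℝ => J (m (t • u))) atTop atBot :=
  statement12_general I J hJ r a ha hapos hB2 hB4 m hm
end
end

section
/- Let p > 2 be a real number. For all t ≥ 0 and all u, v ∈ ℝ³ the inequality ((t² − 1)/2)·|u|^p + t·|u|^{p−2}·⟨u, v⟩ + (1/p)·|u|^p − (1/p)·|tu + v|^p ≤ 0 holds, and the inequality is strict whenever tu + v ≠ u. -/
/-!
With `w = t • u + v`, expanding `‖w‖²` gives the exact identity
`2 φ = (‖u‖^(p-2) ‖w‖² - ((p-2)/p) ‖u‖^p - (2/p) ‖w‖^p) - ‖u‖^(p-2) ‖v‖²`.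
The bracket is nonpositive by the weighted AM-GM inequality with weights `(p-2)/p` and `2/p`,
and vanishes only when `‖u‖ = ‖w‖`; the last term vanishes only when `u = 0` or `v = 0`.
For `t ≥ 0` these two equality cases together force `w = u`.
-/

open Real

namespace PowerNonlinearity

variable {E : Type*} [NormedAddCommGroup E] [InnerProductSpace ℝ E]

/-- `φ(t, u, v)` of condition (F5) for `F₀(u) = |u|^p / p`. -/
noncomputable def phi (p t : ℝ) (u v : E) : ℝ :=
  (t ^ 2 - 1) / 2 * ‖u‖ ^ p + t * ‖u‖ ^ (p - 2) * (inner ℝ u v : ℝ)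
    + 1 / p * ‖u‖ ^ p - 1 / p * ‖t • u + v‖ ^ p

lemma rpow_sub_two_mul_sq_eq {p a b : ℝ} (hp : 0 < p) (ha : 0 ≤ a) (hb : 0 ≤ b) :
    a ^ (p - 2) * b ^ 2 = (a ^ p) ^ ((p - 2) / p) * (b ^ p) ^ (2 / p) := by
  rw [← rpow_mul ha, ← rpow_mul hb, mul_div_cancel₀ _ hp.ne', mul_div_cancel₀ _ hp.ne']
  norm_cast

lemma rpow_sub_two_mul_sq_le {p a b : ℝ} (hp : 2 < p) (ha : 0 ≤ a) (hb : 0 ≤ b) :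
    a ^ (p - 2) * b ^ 2 ≤ (p - 2) / p * a ^ p + 2 / p * b ^ p := by
  have hp0 : 0 < p := by linarith
  rw [rpow_sub_two_mul_sq_eq hp0 ha hb]
  exact geom_mean_le_arith_mean2_weighted (by bound) (by positivity) (by positivity)
    (by positivity) (by field_simp; ring)

lemma rpow_sub_two_mul_sq_lt {p a b : ℝ} (hp : 2 < p) (ha : 0 ≤ a) (hb : 0 ≤ b) (hab : a ≠ b) :
    a ^ (p - 2) * b ^ 2 < (p - 2) / p * a ^ p + 2 / p * b ^ p := by
  have hp0 : 0 < p := by linarith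
  rw [rpow_sub_two_mul_sq_eq hp0 ha hb]
  refine (geom_mean_lt_arith_mean2_weighted_iff_of_pos (by bound) (by positivity)
    (by positivity) (by positivity) (by field_simp; ring)).2 ?_
  rwa [Ne, rpow_left_inj ha hb hp0.ne']

lemma phi_eq {p : ℝ} (hp : p ≠ 0) (t : ℝ) (u v : E) :
    phi p t u v = (‖u‖ ^ (p - 2) * ‖t • u + v‖ ^ 2
        - ((p - 2) / p * ‖u‖ ^ p + 2 / p * ‖t • u + v‖ ^ p)) / 2
      - ‖u‖ ^ (p - 2) * ‖v‖ ^ 2 / 2 := by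
  have hpow : ‖u‖ ^ p = ‖u‖ ^ (p - 2) * ‖u‖ ^ 2 := by
    rw [← rpow_natCast, ← rpow_add' (norm_nonneg u) (by simpa using hp)]
    norm_num
  rw [phi, norm_add_sq_real, norm_smul, real_inner_smul_left, hpow, mul_pow, Real.norm_eq_abs,
    sq_abs]
  field_simp
  ring

lemma smul_add_eq_self_of_norm_eq {t : ℝ} {u v : E} (ht : 0 ≤ t) (hnorm : ‖t • u + v‖ = ‖u‖)
    (huv : u = 0 ∨ v = 0) : t • u + v = u := by
  rcases huv with rfl | rfl
  · simpa using hnorm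
  · rw [add_zero, norm_smul, Real.norm_of_nonneg ht] at hnorm
    rcases eq_or_ne u 0 with rfl | hu
    · simp
    · rw [add_zero, mul_eq_right₀ (norm_ne_zero_iff.2 hu) |>.1 hnorm, one_smul]

lemma phi_nonpos {p : ℝ} (hp : 2 < p) (t : ℝ) (u v : E) : phi p t u v ≤ 0 := by
  rw [phi_eq (by linarith)]
  have := rpow_sub_two_mul_sq_le hp (norm_nonneg u) (norm_nonneg (t • u + v))
  have : 0 ≤ ‖u‖ ^ (p - 2) * ‖v‖ ^ 2 := by positivity
  linarith

lemma phi_neg {p t : ℝ} (hp : 2 < p) (ht : 0 ≤ t) {u v : E} (h : t • u + v ≠ u) :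
    phi p t u v < 0 := by
  rw [phi_eq (by linarith)]
  rcases eq_or_ne ‖u‖ ‖t • u + v‖ with hnorm | hnorm
  · have hu : u ≠ 0 := fun hu => h (smul_add_eq_self_of_norm_eq ht hnorm.symm (.inl hu))
    have hv : v ≠ 0 := fun hv => h (smul_add_eq_self_of_norm_eq ht hnorm.symm (.inr hv))
    have := rpow_sub_two_mul_sq_le hp (norm_nonneg u) (norm_nonneg (t • u + v))
    have : 0 < ‖u‖ ^ (p - 2) * ‖v‖ ^ 2 := by positivity
    linarith
  · have := rpow_sub_two_mul_sq_lt hp (norm_nonneg u) (norm_nonneg (t • u + v)) hnorm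
    have : 0 ≤ ‖u‖ ^ (p - 2) * ‖v‖ ^ 2 := by positivity
    linarith

end PowerNonlinearity

/-- **The model nonlinearity `F₀(u) = |u|^p / p` satisfies (F5).** For `p > 2`, `t ≥ 0` and
`u v : ℝ³`, `((t²-1)/2)|u|^p + t|u|^{p-2}⟨u,v⟩ + (1/p)|u|^p - (1/p)|tu+v|^p ≤ 0`, with strict
inequality whenever `tu + v ≠ u`. -/
theorem statement15 (p : ℝ) (hp : 2 < p) (t : ℝ) (ht : 0 ≤ t)
    (u v : EuclideanSpace ℝ (Fin 3)) :
    (t ^ 2 - 1) / 2 * ‖u‖ ^ p + t * ‖u‖ ^ (p - 2) * (inner ℝ u v : ℝ)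
        + 1 / p * ‖u‖ ^ p - 1 / p * ‖t • u + v‖ ^ p ≤ 0 ∧
      (t • u + v ≠ u →
        (t ^ 2 - 1) / 2 * ‖u‖ ^ p + t * ‖u‖ ^ (p - 2) * (inner ℝ u v : ℝ)
          + 1 / p * ‖u‖ ^ p - 1 / p * ‖t • u + v‖ ^ p < 0) :=
  ⟨PowerNonlinearity.phi_nonpos hp t u v, PowerNonlinearity.phi_neg hp ht⟩
end

section
/- Let Ω ⊆ ℝ³ be invariant under all rotations about the x₃-axis, and let E : Ω → ℝ³ be equivariant under these rotations, i.e. E(gx) = g·E(x) for every x ∈ Ω and every rotation g of ℝ³ fixing the x₃-axis (g = diag(R, 1) with R ∈ SO(2)). Then there exist unique functions α, β, γ defined on D := {(r, z) ∈ (0, ∞) × ℝ : (r, 0, z) ∈ Ω} such that for every x = (x₁, x₂, x₃) ∈ Ω with r := √(x₁² + x₂²) > 0 one has E(x) = α(r, x₃)·(−x₂, x₁, 0) + β(r, x₃)·(x₁, x₂, 0) + γ(r, x₃)·(0, 0, 1). -/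
/-!
For `x` off the axis, with `r = √(x₁² + x₂²)`, the rotation `R` with first row `(x₁, x₂)/r` moves
`x` to `(r, 0, x₃)`, so equivariance gives `E x = diag(R, 1)ᵀ E(r, 0, x₃)`. The columns of
`diag(R, 1)ᵀ` are `(x₁, x₂, 0)/r`, `(-x₂, x₁, 0)/r` and `(0, 0, 1)`, which reads off
`α = E₂(r, 0, z)/r`, `β = E₁(r, 0, z)/r`, `γ = E₃(r, 0, z)`. Conversely any decomposition,
evaluated at `(r, 0, z)`, returns exactly these coefficients.
-/

/-- The rotation `diag(R, 1)` of `ℝ³` about the `x₃`-axis, with 2×2 block `R`. -/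
noncomputable def rotAx (R : Matrix (Fin 2) (Fin 2) ℝ) : Matrix (Fin 3) (Fin 3) ℝ :=
  Matrix.reindex finSumFinEquiv finSumFinEquiv
    (Matrix.fromBlocks R 0 0 (1 : Matrix (Fin 1) (Fin 1) ℝ))

open Matrix

lemma rotAx_mul (R S : Matrix (Fin 2) (Fin 2) ℝ) : rotAx (R * S) = rotAx R * rotAx S := by
  simp only [rotAx, reindex_apply, submatrix_mul_equiv, fromBlocks_multiply, Matrix.mul_zero,
    Matrix.zero_mul, Matrix.mul_one, add_zero, zero_add]

lemma rotAx_one : rotAx 1 = 1 := by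
  rw [rotAx, fromBlocks_one, reindex_apply, submatrix_one_equiv]

lemma rotAx_eq (R : Matrix (Fin 2) (Fin 2) ℝ) :
    rotAx R = !![R 0 0, R 0 1, 0; R 1 0, R 1 1, 0; 0, 0, 1] := by
  ext i j
  fin_cases i <;> fin_cases j <;> rfl

lemma rotAx_mulVec (R : Matrix (Fin 2) (Fin 2) ℝ) (x : Fin 3 → ℝ) :
    rotAx R *ᵥ x = ![R 0 0 * x 0 + R 0 1 * x 1, R 1 0 * x 0 + R 1 1 * x 1, x 2] := by
  ext i
  fin_cases i <;> simp [rotAx_eq, mulVec, dotProduct, Fin.sum_univ_three]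

lemma rotAx_transpose_mul_self {R : Matrix (Fin 2) (Fin 2) ℝ}
    (hR : R ∈ orthogonalGroup (Fin 2) ℝ) : rotAx Rᵀ * rotAx R = 1 := by
  rw [← rotAx_mul, (mem_orthogonalGroup_iff' (Fin 2) ℝ).mp hR, rotAx_one]

lemma eq_rotAx_transpose_mulVec_of_map_mulVec {R : Matrix (Fin 2) (Fin 2) ℝ}
    (hR : R ∈ orthogonalGroup (Fin 2) ℝ) {E : (Fin 3 → ℝ) → Fin 3 → ℝ} {x : Fin 3 → ℝ}
    (hEx : E (rotAx R *ᵥ x) = rotAx R *ᵥ E x) :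
    E x = rotAx Rᵀ *ᵥ E (rotAx R *ᵥ x) := by
  rw [hEx, mulVec_mulVec, rotAx_transpose_mul_self hR, one_mulVec]

/-- The rotation with cosine `c` and sine `-s`, written so that `planeRot (x₁/r) (x₂/r)` sends
`(x₁, x₂)` to `(r, 0)`. -/
def planeRot (c s : ℝ) : Matrix (Fin 2) (Fin 2) ℝ := !![c, s; -s, c]

lemma planeRot_transpose (c s : ℝ) : (planeRot c s)ᵀ = planeRot c (-s) := by
  ext i j
  fin_cases i <;> fin_cases j <;> simp [planeRot]

lemma planeRot_mem_orthogonalGroup {c s : ℝ} (h : c ^ 2 + s ^ 2 = 1) :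
    planeRot c s ∈ orthogonalGroup (Fin 2) ℝ := by
  rw [mem_orthogonalGroup_iff, planeRot_transpose, planeRot, planeRot, mul_fin_two, one_fin_two]
  simp only [EmbeddingLike.apply_eq_iff_eq, vecCons_inj, and_true]
  exact ⟨⟨by linear_combination h, by ring⟩, by ring, by linear_combination h⟩

lemma det_planeRot (c s : ℝ) : (planeRot c s).det = c ^ 2 + s ^ 2 := by
  rw [planeRot, det_fin_two_of]
  ring

lemma rotAx_planeRot_mulVec (c s : ℝ) (x : Fin 3 → ℝ) :
    rotAx (planeRot c s) *ᵥ x = ![c * x 0 + s * x 1, -s * x 0 + c * x 1, x 2] := by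
  rw [rotAx_mulVec]
  rfl

section RadialFrame

variable {x : Fin 3 → ℝ} {r : ℝ}

lemma div_sq_add_div_sq_of_sq_eq (hr : r ≠ 0) (hr2 : r ^ 2 = x 0 ^ 2 + x 1 ^ 2) :
    (x 0 / r) ^ 2 + (x 1 / r) ^ 2 = 1 := by
  field_simp
  exact hr2.symm

lemma rotAx_planeRot_div_mulVec (hr : r ≠ 0) (hr2 : r ^ 2 = x 0 ^ 2 + x 1 ^ 2) :
    rotAx (planeRot (x 0 / r) (x 1 / r)) *ᵥ x = ![r, 0, x 2] := by
  have h0 : x 0 / r * x 0 + x 1 / r * x 1 = r := by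
    field_simp
    linear_combination -hr2
  have h1 : -(x 1 / r) * x 0 + x 0 / r * x 1 = 0 := by ring
  rw [rotAx_planeRot_mulVec, h0, h1]

lemma rotAx_planeRot_div_transpose_mulVec (v : Fin 3 → ℝ) :
    rotAx (planeRot (x 0 / r) (x 1 / r))ᵀ *ᵥ v
      = (v 1 / r) • ![-(x 1), x 0, 0] + (v 0 / r) • ![x 0, x 1, 0] + v 2 • ![0, 0, 1] := by
  rw [planeRot_transpose, rotAx_planeRot_mulVec]
  simp only [smul_cons, smul_eq_mul, smul_empty, add_cons, empty_add_empty, head_cons, tail_cons,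
    vecCons_inj, and_true]
  exact ⟨by ring, by ring, by ring⟩

end RadialFrame

lemma coeff_eq_of_eq_polarFrame {x v : Fin 3 → ℝ} {a b c : ℝ} (hx0 : x 0 ≠ 0) (hx1 : x 1 = 0)
    (hv : v = a • ![-(x 1), x 0, 0] + b • ![x 0, x 1, 0] + c • ![0, 0, 1]) :
    a = v 1 / x 0 ∧ b = v 0 / x 0 ∧ c = v 2 := by
  subst hv
  simp [hx0, hx1]

theorem statement18_general (Ω : Set (Fin 3 → ℝ))
    (E : (Fin 3 → ℝ) → (Fin 3 → ℝ))
    (hE : ∀ R : Matrix (Fin 2) (Fin 2) ℝ, R ∈ Matrix.orthogonalGroup (Fin 2) ℝ → R.det = 1 →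
      ∀ x ∈ Ω, E ((rotAx R).mulVec x) = (rotAx R).mulVec (E x)) :
    ∃ α β γ : ℝ → ℝ → ℝ,
      (∀ x ∈ Ω, 0 < Real.sqrt (x 0 ^ 2 + x 1 ^ 2) →
        E x = α (Real.sqrt (x 0 ^ 2 + x 1 ^ 2)) (x 2) • ![-(x 1), x 0, 0]
            + β (Real.sqrt (x 0 ^ 2 + x 1 ^ 2)) (x 2) • ![x 0, x 1, 0]
            + γ (Real.sqrt (x 0 ^ 2 + x 1 ^ 2)) (x 2) • ![0, 0, 1]) ∧
      ∀ α' β' γ' : ℝ → ℝ → ℝ,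
        (∀ x ∈ Ω, 0 < Real.sqrt (x 0 ^ 2 + x 1 ^ 2) →
          E x = α' (Real.sqrt (x 0 ^ 2 + x 1 ^ 2)) (x 2) • ![-(x 1), x 0, 0]
              + β' (Real.sqrt (x 0 ^ 2 + x 1 ^ 2)) (x 2) • ![x 0, x 1, 0]
              + γ' (Real.sqrt (x 0 ^ 2 + x 1 ^ 2)) (x 2) • ![0, 0, 1]) →
        ∀ r z : ℝ, 0 < r → ![r, 0, z] ∈ Ω →
          α' r z = α r z ∧ β' r z = β r z ∧ γ' r z = γ r z := by
  refine ⟨fun r z ↦ E ![r, 0, z] 1 / r, fun r z ↦ E ![r, 0, z] 0 / r, fun r z ↦ E ![r, 0, z] 2,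
    ?_, ?_⟩
  · intro x hx hr
    have hr2 : √(x 0 ^ 2 + x 1 ^ 2) ^ 2 = x 0 ^ 2 + x 1 ^ 2 := Real.sq_sqrt (by positivity)
    have hunit := div_sq_add_div_sq_of_sq_eq hr.ne' hr2
    have hR := planeRot_mem_orthogonalGroup hunit
    have hEx := hE _ hR (by rw [det_planeRot, hunit]) x hx
    rw [eq_rotAx_transpose_mulVec_of_map_mulVec hR hEx, rotAx_planeRot_div_mulVec hr.ne' hr2,
      rotAx_planeRot_div_transpose_mulVec]
  · intro α' β' γ' hdecomp r z hr hp
    have hnorm : √((![r, 0, z] : Fin 3 → ℝ) 0 ^ 2 + (![r, 0, z] : Fin 3 → ℝ) 1 ^ 2) = r := by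
      simp [Real.sqrt_sq hr.le]
    have hEp := hdecomp _ hp (by rwa [hnorm])
    rw [hnorm] at hEp
    exact coeff_eq_of_eq_polarFrame hr.ne' rfl hEp

/-- **Decomposition of cylindrically equivariant vector fields (Lemma 6.2).**
If `Ω ⊆ ℝ³` is invariant under all rotations about the `x₃`-axis and `E : Ω → ℝ³` is
equivariant, then there are functions `α, β, γ` of `(r, x₃)`, unique on
`D = {(r, z) : r > 0, (r,0,z) ∈ Ω}`, with
`E(x) = α(r,x₃)(-x₂,x₁,0) + β(r,x₃)(x₁,x₂,0) + γ(r,x₃)(0,0,1)` whenever `r > 0`. -/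
theorem statement18 (Ω : Set (Fin 3 → ℝ))
    (hΩ : ∀ R : Matrix (Fin 2) (Fin 2) ℝ, R ∈ Matrix.orthogonalGroup (Fin 2) ℝ → R.det = 1 →
      ∀ x ∈ Ω, (rotAx R).mulVec x ∈ Ω)
    (E : (Fin 3 → ℝ) → (Fin 3 → ℝ))
    (hE : ∀ R : Matrix (Fin 2) (Fin 2) ℝ, R ∈ Matrix.orthogonalGroup (Fin 2) ℝ → R.det = 1 →
      ∀ x ∈ Ω, E ((rotAx R).mulVec x) = (rotAx R).mulVec (E x)) :
    ∃ α β γ : ℝ → ℝ → ℝ,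
      (∀ x ∈ Ω, 0 < Real.sqrt (x 0 ^ 2 + x 1 ^ 2) →
        E x = α (Real.sqrt (x 0 ^ 2 + x 1 ^ 2)) (x 2) • ![-(x 1), x 0, 0]
            + β (Real.sqrt (x 0 ^ 2 + x 1 ^ 2)) (x 2) • ![x 0, x 1, 0]
            + γ (Real.sqrt (x 0 ^ 2 + x 1 ^ 2)) (x 2) • ![0, 0, 1]) ∧
      ∀ α' β' γ' : ℝ → ℝ → ℝ,
        (∀ x ∈ Ω, 0 < Real.sqrt (x 0 ^ 2 + x 1 ^ 2) →
          E x = α' (Real.sqrt (x 0 ^ 2 + x 1 ^ 2)) (x 2) • ![-(x 1), x 0, 0]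
              + β' (Real.sqrt (x 0 ^ 2 + x 1 ^ 2)) (x 2) • ![x 0, x 1, 0]
              + γ' (Real.sqrt (x 0 ^ 2 + x 1 ^ 2)) (x 2) • ![0, 0, 1]) →
        ∀ r z : ℝ, 0 < r → ![r, 0, z] ∈ Ω →
          α' r z = α r z ∧ β' r z = β r z ∧ γ' r z = γ r z :=
  statement18_general Ω E hE
end
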